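/- arXiv:1204.3387 — 14 statements merged into one kernel-verified Lean document; each statement's English description precedes it below -/
import Mathlib

section
/- Let x, y, φ : ℝ → ℝ be twice differentiable functions satisfying the nonholonomic skate system. Then the function t ↦ ẋ(t) sin φ(t) − ẏ(t) cos φ(t) is constant on ℝ. -/
open Real

/-- For twice differentiable solutions of the nonholonomic skate system
`ẍ = cos²φ − φ̇ sinφ (ẋ cosφ + ẏ sinφ)`, `ÿ = cosφ sinφ + φ̇ cosφ (ẋ cosφ + ẏ sinφ)`,
`φ̈ = 0`, the function `t ↦ ẋ sinφ − ẏ cosφ` is constant on `ℝ`. -/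
theorem stmt_4 (x y φ : ℝ → ℝ)
    (hx : Differentiable ℝ x) (hx' : Differentiable ℝ (deriv x))
    (hy : Differentiable ℝ y) (hy' : Differentiable ℝ (deriv y))
    (hφ : Differentiable ℝ φ) (hφ' : Differentiable ℝ (deriv φ))
    (heqx : ∀ t, deriv (deriv x) t =
      cos (φ t) ^ 2 - deriv φ t * sin (φ t) *
        (deriv x t * cos (φ t) + deriv y t * sin (φ t)))
    (heqy : ∀ t, deriv (deriv y) t =
      cos (φ t) * sin (φ t) + deriv φ t * cos (φ t) *
        (deriv x t * cos (φ t) + deriv y t * sin (φ t)))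
    (heqφ : ∀ t, deriv (deriv φ) t = 0) :
    ∃ c : ℝ, ∀ t, deriv x t * sin (φ t) - deriv y t * cos (φ t) = c := by
  set f : ℝ → ℝ := fun t => deriv x t * sin (φ t) - deriv y t * cos (φ t) with hf
  have key : ∀ t, HasDerivAt f 0 t := by
    intro t
    have h1 : HasDerivAt (fun t => deriv x t * sin (φ t))
        (deriv (deriv x) t * sin (φ t) + deriv x t * (cos (φ t) * deriv φ t)) t :=
      ((hx' t).hasDerivAt).mul ((hφ t).hasDerivAt.sin)
    have h2 : HasDerivAt (fun t => deriv y t * cos (φ t))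
        (deriv (deriv y) t * cos (φ t) + deriv y t * (-sin (φ t) * deriv φ t)) t :=
      ((hy' t).hasDerivAt).mul ((hφ t).hasDerivAt.cos)
    have h := h1.sub h2
    have hsc : sin (φ t) ^ 2 + cos (φ t) ^ 2 = 1 := sin_sq_add_cos_sq (φ t)
    have : deriv (deriv x) t * sin (φ t) + deriv x t * (cos (φ t) * deriv φ t) -
        (deriv (deriv y) t * cos (φ t) + deriv y t * (-sin (φ t) * deriv φ t)) = 0 := by
      rw [heqx t, heqy t]
      linear_combination (-(deriv φ t * (deriv x t * cos (φ t) + deriv y t * sin (φ t)))) * hsc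
    rwa [this] at h
  have hdiff : Differentiable ℝ f := fun t => (key t).differentiableAt
  have hderiv : ∀ t, deriv f t = 0 := fun t => (key t).deriv
  exact ⟨f 0, fun t => by
    have := is_const_of_deriv_eq_zero hdiff hderiv t 0
    simpa [hf] using this⟩
end

section
/- Let x, y, φ : ℝ → ℝ be twice differentiable functions satisfying the nonholonomic skate system and the constraint ẋ(t) sin φ(t) − ẏ(t) cos φ(t) = 0 for all t. Then the total energy t ↦ ½(ẋ(t)² + ẏ(t)² + φ̇(t)²) − x(t) is constant on ℝ. -/
open Real

/-- For twice differentiable solutions of the nonholonomic skate system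
satisfying the constraint `ẋ sinφ − ẏ cosφ = 0`, the total energy
`t ↦ ½(ẋ² + ẏ² + φ̇²) − x` is constant on `ℝ`. -/
theorem stmt_5 (x y φ : ℝ → ℝ)
    (hx : Differentiable ℝ x) (hx' : Differentiable ℝ (deriv x))
    (hy : Differentiable ℝ y) (hy' : Differentiable ℝ (deriv y))
    (hφ : Differentiable ℝ φ) (hφ' : Differentiable ℝ (deriv φ))
    (heqx : ∀ t, deriv (deriv x) t =
      cos (φ t) ^ 2 - deriv φ t * sin (φ t) *
        (deriv x t * cos (φ t) + deriv y t * sin (φ t)))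
    (heqy : ∀ t, deriv (deriv y) t =
      cos (φ t) * sin (φ t) + deriv φ t * cos (φ t) *
        (deriv x t * cos (φ t) + deriv y t * sin (φ t)))
    (heqφ : ∀ t, deriv (deriv φ) t = 0)
    (hcon : ∀ t, deriv x t * sin (φ t) - deriv y t * cos (φ t) = 0) :
    ∃ c : ℝ, ∀ t,
      (1 / 2) * ((deriv x t) ^ 2 + (deriv y t) ^ 2 + (deriv φ t) ^ 2) - x t = c := by
  set E : ℝ → ℝ := fun t =>
    (1 / 2) * ((deriv x t) ^ 2 + (deriv y t) ^ 2 + (deriv φ t) ^ 2) - x t with hE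
  have key : ∀ t, HasDerivAt E 0 t := by
    intro t
    have Hx : HasDerivAt (deriv x) (deriv (deriv x) t) t := (hx' t).hasDerivAt
    have Hy : HasDerivAt (deriv y) (deriv (deriv y) t) t := (hy' t).hasDerivAt
    have Hφ : HasDerivAt (deriv φ) (deriv (deriv φ) t) t := (hφ' t).hasDerivAt
    have Hx0 : HasDerivAt x (deriv x t) t := (hx t).hasDerivAt
    have H := (((Hx.pow 2).add ((Hy.pow 2).add (Hφ.pow 2))).const_mul
      ((1:ℝ)/2)).sub Hx0
    have hEeq : E = fun s =>
        (1 / 2) * ((deriv x s) ^ 2 + ((deriv y s) ^ 2 + (deriv φ s) ^ 2)) - x s := by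
      funext s; simp [hE]; ring
    rw [hEeq]
    refine H.congr_deriv (Eq.symm ?_)
    have h1 := heqx t
    have h2 := heqy t
    have h3 := heqφ t
    have h4 := hcon t
    have hs : sin (φ t) ^ 2 + cos (φ t) ^ 2 = 1 := sin_sq_add_cos_sq (φ t)
    rw [h1, h2, h3]
    push_cast
    linear_combination (sin (φ t) + deriv φ t *
        (deriv x t * cos (φ t) + deriv y t * sin (φ t))) * h4
      - deriv x t * hs
  have hdiff : Differentiable ℝ E := fun s => (key s).differentiableAt
  have hder : ∀ s, deriv E s = 0 := fun s => (key s).deriv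
  exact ⟨E 0, fun t => is_const_of_deriv_eq_zero hdiff hder t 0⟩
end

section
/- Let w ≠ 0 be a real number. The functions x(t) = sin²(wt)/(2w²), y(t) = (wt − ½ sin(2wt))/(2w²), φ(t) = wt satisfy the nonholonomic skate system on ℝ, the constraint ẋ sin φ − ẏ cos φ = 0 on ℝ, the initial conditions (x(0), y(0), φ(0), ẋ(0), ẏ(0), φ̇(0)) = (0,0,0,0,0,w), and moreover 0 ≤ x(t) ≤ 1/(2w²) for all t. -/
open Real

/-- For `w ≠ 0`, the functions `x(t) = sin²(wt)/(2w²)`,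
`y(t) = (wt − ½ sin(2wt))/(2w²)`, `φ(t) = wt` satisfy the nonholonomic skate system,
the constraint `ẋ sinφ − ẏ cosφ = 0`, the initial conditions
`(x,y,φ,ẋ,ẏ,φ̇)(0) = (0,0,0,0,0,w)`, and `0 ≤ x(t) ≤ 1/(2w²)` for all `t`. -/
theorem stmt_6 (w : ℝ) (hw : w ≠ 0)
    (x y φ : ℝ → ℝ)
    (hxdef : x = fun t => sin (w * t) ^ 2 / (2 * w ^ 2))
    (hydef : y = fun t => (w * t - sin (2 * w * t) / 2) / (2 * w ^ 2))
    (hφdef : φ = fun t => w * t) :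
    (∀ t, deriv (deriv x) t =
      cos (φ t) ^ 2 - deriv φ t * sin (φ t) *
        (deriv x t * cos (φ t) + deriv y t * sin (φ t))) ∧
    (∀ t, deriv (deriv y) t =
      cos (φ t) * sin (φ t) + deriv φ t * cos (φ t) *
        (deriv x t * cos (φ t) + deriv y t * sin (φ t))) ∧
    (∀ t, deriv (deriv φ) t = 0) ∧
    (∀ t, deriv x t * sin (φ t) - deriv y t * cos (φ t) = 0) ∧
    x 0 = 0 ∧ y 0 = 0 ∧ φ 0 = 0 ∧
    deriv x 0 = 0 ∧ deriv y 0 = 0 ∧ deriv φ 0 = w ∧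
    (∀ t, 0 ≤ x t ∧ x t ≤ 1 / (2 * w ^ 2)) := by
  have hw2 : (w:ℝ)^2 ≠ 0 := pow_ne_zero _ hw
  have hu : ∀ t : ℝ, HasDerivAt (fun t : ℝ => w * t) w t := by
    intro t
    simpa using (hasDerivAt_id t).const_mul w
  have hx' : ∀ t, HasDerivAt x (sin (w * t) * cos (w * t) / w) t := by
    intro t
    rw [hxdef]
    have h := (((hu t).sin).pow 2).div_const (2 * w ^ 2)
    refine h.congr_deriv ?_
    field_simp
    ring
  have hy' : ∀ t, HasDerivAt y (sin (w * t) ^ 2 / w) t := by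
    intro t
    rw [hydef]
    have h2 : HasDerivAt (fun t : ℝ => 2 * w * t) (2 * w) t := by
      simpa using (hasDerivAt_id t).const_mul (2 * w)
    have h := (((hu t).sub ((h2.sin).div_const 2))).div_const (2 * w ^ 2)
    refine h.congr_deriv ?_
    have hc : cos (2 * w * t) = 1 - 2 * sin (w * t) ^ 2 := by
      have : 2 * w * t = 2 * (w * t) := by ring
      rw [this, cos_two_mul]
      have := sin_sq_add_cos_sq (w * t)
      nlinarith
    rw [hc]
    field_simp
    ring
  have hφ' : ∀ t, HasDerivAt φ w t := by
    intro t; rw [hφdef]; exact hu t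
  have hdx : deriv x = fun t => sin (w * t) * cos (w * t) / w :=
    funext fun t => (hx' t).deriv
  have hdy : deriv y = fun t => sin (w * t) ^ 2 / w :=
    funext fun t => (hy' t).deriv
  have hdφ : deriv φ = fun _ => w := funext fun t => (hφ' t).deriv
  have hx'' : ∀ t, deriv (deriv x) t = cos (w * t) ^ 2 - sin (w * t) ^ 2 := by
    intro t
    rw [hdx]
    have h := (((hu t).sin).mul ((hu t).cos)).div_const w
    have := h.deriv
    erw [this]
    field_simp
    ring
  have hy'' : ∀ t, deriv (deriv y) t = 2 * sin (w * t) * cos (w * t) := by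
    intro t
    rw [hdy]
    have h := (((hu t).sin).pow 2).div_const w
    have := h.deriv
    erw [this]
    field_simp
    ring
  have hφ'' : ∀ t, deriv (deriv φ) t = 0 := by
    intro t; rw [hdφ]; simp
  have pyth : ∀ t : ℝ, sin (w * t) ^ 2 + cos (w * t) ^ 2 = 1 := fun t => sin_sq_add_cos_sq _
  refine ⟨?_, ?_, hφ'', ?_, ?_, ?_, ?_, ?_, ?_, ?_, ?_⟩
  · intro t
    rw [hx'' t, hdx, hdy, hdφ, hφdef]
    have := pyth t
    field_simp
    linear_combination (sin (w * t) ^ 2) * this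
  · intro t
    rw [hy'' t, hdx, hdy, hdφ, hφdef]
    have := pyth t
    field_simp
    linear_combination (-(sin (w * t) * cos (w * t))) * this
  · intro t
    rw [hdx, hdy, hφdef]
    field_simp
    ring
  · rw [hxdef]; simp
  · rw [hydef]; simp
  · rw [hφdef]; simp
  · rw [hdx]; simp
  · rw [hdy]; simp
  · rw [hdφ]
  · intro t
    rw [hxdef]
    constructor
    · positivity
    · have h1 : sin (w * t) ^ 2 ≤ 1 := sin_sq_le_one _
      have h2 : (0:ℝ) < 2 * w ^ 2 := by positivity
      exact div_le_div_of_nonneg_right h1 h2.le |>.trans_eq rfl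
end

section
/- Let x, y, φ : ℝ → ℝ be twice differentiable and λ : ℝ → ℝ differentiable, satisfying the vakonomic skate system. Then the function t ↦ ẋ(t) sin φ(t) − ẏ(t) cos φ(t) is constant on ℝ. -/
open Real

/-- For twice differentiable `x, y, φ` and differentiable `λ` satisfying the
vakonomic skate system, the function `t ↦ ẋ sinφ − ẏ cosφ` is constant on `ℝ`. -/
theorem stmt_8 (x y φ l : ℝ → ℝ)
    (hx : Differentiable ℝ x) (hx' : Differentiable ℝ (deriv x))
    (hy : Differentiable ℝ y) (hy' : Differentiable ℝ (deriv y))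
    (hφ : Differentiable ℝ φ) (hφ' : Differentiable ℝ (deriv φ))
    (hl : Differentiable ℝ l)
    (heqx : ∀ t, deriv (deriv x) t =
      -(deriv φ t) * sin (φ t) * (deriv x t * cos (φ t) + deriv y t * sin (φ t))
        + l t * deriv φ t * cos (φ t) + cos (φ t) ^ 2)
    (heqy : ∀ t, deriv (deriv y) t =
      deriv φ t * cos (φ t) * (deriv x t * cos (φ t) + deriv y t * sin (φ t))
        + l t * deriv φ t * sin (φ t) + sin (φ t) * cos (φ t))
    (heqφ : ∀ t, deriv (deriv φ) t =
      -(l t) * (deriv x t * cos (φ t) + deriv y t * sin (φ t)))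
    (heql : ∀ t, deriv l t =
      -sin (φ t) - deriv φ t * (deriv x t * cos (φ t) + deriv y t * sin (φ t))) :
    ∃ c : ℝ, ∀ t, deriv x t * sin (φ t) - deriv y t * cos (φ t) = c := by

  set F : ℝ → ℝ := fun t => deriv x t * sin (φ t) - deriv y t * cos (φ t) with hF
  have hdiff : Differentiable ℝ F := (hx'.mul hφ.sin).sub (hy'.mul hφ.cos)
  have hderiv : ∀ t, deriv F t = 0 := by
    intro t
    have A := ((hx' t).hasDerivAt).mul ((hφ t).hasDerivAt.sin)
    have B := ((hy' t).hasDerivAt).mul ((hφ t).hasDerivAt.cos)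
    have H := A.sub B
    rw [(show HasDerivAt F _ t from H).deriv, heqx t, heqy t]
    have hpyth := sin_sq_add_cos_sq (φ t)
    linear_combination (-(deriv φ t) * (deriv x t * cos (φ t) + deriv y t * sin (φ t))) * hpyth
  refine ⟨F 0, fun t => ?_⟩
  exact is_const_of_deriv_eq_zero hdiff hderiv t 0
end

section
/- Let x, y, φ : ℝ → ℝ be twice differentiable and λ : ℝ → ℝ differentiable, satisfying the vakonomic skate system. Then the time-reversed functions x̃(t) := x(−t), ỹ(t) := y(−t), φ̃(t) := φ(−t), λ̃(t) := −λ(−t) also satisfy the vakonomic skate system. -/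
open Real

private lemma diff_neg_comp {f : ℝ → ℝ} (hf : Differentiable ℝ f) :
    Differentiable ℝ (fun t : ℝ => f (-t)) :=
  hf.comp differentiable_neg

private lemma deriv_negc (f : ℝ → ℝ) :
    deriv (fun t : ℝ => f (-t)) = fun t => -deriv f (-t) := by
  funext t; exact deriv_comp_neg f t

/-- If `(x, y, φ, λ)` (with `x, y, φ` twice differentiable and `λ`
differentiable) satisfies the vakonomic skate system, then the time-reversed functions
`x̃(t) := x(−t)`, `ỹ(t) := y(−t)`, `φ̃(t) := φ(−t)`, `λ̃(t) := −λ(−t)` also satisfy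
the vakonomic skate system. -/
theorem stmt_9 (x y φ l : ℝ → ℝ)
    (hx : Differentiable ℝ x) (hx' : Differentiable ℝ (deriv x))
    (hy : Differentiable ℝ y) (hy' : Differentiable ℝ (deriv y))
    (hφ : Differentiable ℝ φ) (hφ' : Differentiable ℝ (deriv φ))
    (hl : Differentiable ℝ l)
    (heqx : ∀ t, deriv (deriv x) t =
      -(deriv φ t) * sin (φ t) * (deriv x t * cos (φ t) + deriv y t * sin (φ t))
        + l t * deriv φ t * cos (φ t) + cos (φ t) ^ 2)
    (heqy : ∀ t, deriv (deriv y) t =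
      deriv φ t * cos (φ t) * (deriv x t * cos (φ t) + deriv y t * sin (φ t))
        + l t * deriv φ t * sin (φ t) + sin (φ t) * cos (φ t))
    (heqφ : ∀ t, deriv (deriv φ) t =
      -(l t) * (deriv x t * cos (φ t) + deriv y t * sin (φ t)))
    (heql : ∀ t, deriv l t =
      -sin (φ t) - deriv φ t * (deriv x t * cos (φ t) + deriv y t * sin (φ t)))
    (X Y Φ Λ : ℝ → ℝ)
    (hX : X = fun t => x (-t)) (hY : Y = fun t => y (-t))
    (hΦ : Φ = fun t => φ (-t)) (hΛ : Λ = fun t => -l (-t)) :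
    Differentiable ℝ X ∧ Differentiable ℝ (deriv X) ∧
    Differentiable ℝ Y ∧ Differentiable ℝ (deriv Y) ∧
    Differentiable ℝ Φ ∧ Differentiable ℝ (deriv Φ) ∧
    Differentiable ℝ Λ ∧
    (∀ t, deriv (deriv X) t =
      -(deriv Φ t) * sin (Φ t) * (deriv X t * cos (Φ t) + deriv Y t * sin (Φ t))
        + Λ t * deriv Φ t * cos (Φ t) + cos (Φ t) ^ 2) ∧
    (∀ t, deriv (deriv Y) t =
      deriv Φ t * cos (Φ t) * (deriv X t * cos (Φ t) + deriv Y t * sin (Φ t))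
        + Λ t * deriv Φ t * sin (Φ t) + sin (Φ t) * cos (Φ t)) ∧
    (∀ t, deriv (deriv Φ) t =
      -(Λ t) * (deriv X t * cos (Φ t) + deriv Y t * sin (Φ t))) ∧
    (∀ t, deriv Λ t =
      -sin (Φ t) - deriv Φ t * (deriv X t * cos (Φ t) + deriv Y t * sin (Φ t))) := by
  subst hX hY hΦ hΛ
  have dX1 : deriv (fun t : ℝ => x (-t)) = fun t => -deriv x (-t) := deriv_negc x
  have dY1 : deriv (fun t : ℝ => y (-t)) = fun t => -deriv y (-t) := deriv_negc y
  have dΦ1 : deriv (fun t : ℝ => φ (-t)) = fun t => -deriv φ (-t) := deriv_negc φ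
  have dX2 : ∀ t, deriv (fun t : ℝ => -deriv x (-t)) t = deriv (deriv x) (-t) := by
    intro t
    rw [deriv.fun_neg' (f := fun t : ℝ => deriv x (-t))]; simp [deriv_comp_neg]
  have dY2 : ∀ t, deriv (fun t : ℝ => -deriv y (-t)) t = deriv (deriv y) (-t) := by
    intro t
    rw [deriv.fun_neg' (f := fun t : ℝ => deriv y (-t))]; simp [deriv_comp_neg]
  have dΦ2 : ∀ t, deriv (fun t : ℝ => -deriv φ (-t)) t = deriv (deriv φ) (-t) := by
    intro t
    rw [deriv.fun_neg' (f := fun t : ℝ => deriv φ (-t))]; simp [deriv_comp_neg]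
  have dΛ : ∀ t, deriv (fun t : ℝ => -l (-t)) t = deriv l (-t) := by
    intro t
    rw [deriv.fun_neg' (f := fun t : ℝ => l (-t))]; simp [deriv_comp_neg]
  refine ⟨diff_neg_comp hx, ?_, diff_neg_comp hy, ?_, diff_neg_comp hφ, ?_,
    (diff_neg_comp hl).neg, ?_, ?_, ?_, ?_⟩
  · rw [dX1]; exact (diff_neg_comp hx').neg
  · rw [dY1]; exact (diff_neg_comp hy').neg
  · rw [dΦ1]; exact (diff_neg_comp hφ').neg
  · intro t
    rw [dX1, dY1, dΦ1, dX2 t, heqx (-t)]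
    simp only []
    ring
  · intro t
    rw [dX1, dY1, dΦ1, dY2 t, heqy (-t)]
    simp only []
    ring
  · intro t
    rw [dX1, dY1, dΦ1, dΦ2 t, heqφ (-t)]
    simp only []
    ring
  · intro t
    rw [dX1, dY1, dΦ1, dΛ t, heql (-t)]
    simp only []
    ring
end

section
/- Let x, y, φ : ℝ → ℝ be twice differentiable and λ : ℝ → ℝ differentiable, satisfying the vakonomic skate system together with the constraint ẋ(t) sin φ(t) − ẏ(t) cos φ(t) = 0 for all t. Then the total energy t ↦ ½(ẋ(t)² + ẏ(t)² + φ̇(t)²) − x(t) is constant on ℝ. -/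
open Real

/-- For twice differentiable `x, y, φ` and differentiable `λ` satisfying
the vakonomic skate system together with the constraint `ẋ sinφ − ẏ cosφ = 0`, the
total energy `t ↦ ½(ẋ² + ẏ² + φ̇²) − x` is constant on `ℝ`. -/
theorem stmt_10 (x y φ l : ℝ → ℝ)
    (hx : Differentiable ℝ x) (hx' : Differentiable ℝ (deriv x))
    (hy : Differentiable ℝ y) (hy' : Differentiable ℝ (deriv y))
    (hφ : Differentiable ℝ φ) (hφ' : Differentiable ℝ (deriv φ))
    (hl : Differentiable ℝ l)
    (heqx : ∀ t, deriv (deriv x) t =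
      -(deriv φ t) * sin (φ t) * (deriv x t * cos (φ t) + deriv y t * sin (φ t))
        + l t * deriv φ t * cos (φ t) + cos (φ t) ^ 2)
    (heqy : ∀ t, deriv (deriv y) t =
      deriv φ t * cos (φ t) * (deriv x t * cos (φ t) + deriv y t * sin (φ t))
        + l t * deriv φ t * sin (φ t) + sin (φ t) * cos (φ t))
    (heqφ : ∀ t, deriv (deriv φ) t =
      -(l t) * (deriv x t * cos (φ t) + deriv y t * sin (φ t)))
    (heql : ∀ t, deriv l t =
      -sin (φ t) - deriv φ t * (deriv x t * cos (φ t) + deriv y t * sin (φ t)))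
    (hcon : ∀ t, deriv x t * sin (φ t) - deriv y t * cos (φ t) = 0) :
    ∃ c : ℝ, ∀ t,
      (1 / 2) * ((deriv x t) ^ 2 + (deriv y t) ^ 2 + (deriv φ t) ^ 2) - x t = c := by
  set E : ℝ → ℝ := fun t =>
    (1 / 2) * ((deriv x t) ^ 2 + (deriv y t) ^ 2 + (deriv φ t) ^ 2) - x t with hE
  have hEdiff : Differentiable ℝ E := by
    apply Differentiable.sub _ hx
    exact (Differentiable.const_mul (((hx'.pow 2).add (hy'.pow 2)).add (hφ'.pow 2)) _)
  have hderiv : ∀ t, deriv E t = 0 := by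
    intro t
    have h1 : HasDerivAt E
        ((1 / 2) * ((2 * deriv (deriv x) t * deriv x t)
          + (2 * deriv (deriv y) t * deriv y t)
          + (2 * deriv (deriv φ) t * deriv φ t)) - deriv x t) t := by
      have dx := ((hx' t).hasDerivAt.pow 2)
      have dy := ((hy' t).hasDerivAt.pow 2)
      have dφ := ((hφ' t).hasDerivAt.pow 2)
      have h := (((dx.add dy).add dφ).const_mul (1/2 : ℝ)).sub (hx t).hasDerivAt
      refine h.congr_deriv ?_
      norm_num
      ring
    rw [h1.deriv, heqx t, heqy t, heqφ t]
    have hc := hcon t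
    have hpy : sin (φ t) ^ 2 + cos (φ t) ^ 2 = 1 := sin_sq_add_cos_sq (φ t)
    linear_combination (-(deriv φ t) * (deriv x t * cos (φ t) + deriv y t * sin (φ t))
      - sin (φ t)) * hc + deriv x t * hpy
  refine ⟨E 0, fun t => ?_⟩
  have := is_const_of_deriv_eq_zero hEdiff hderiv t 0
  simpa [hE] using this
end

section
/- Let v₀ ≠ 0 be a real number and define x(t) = 0, y(t) = v₀ t, φ(t) = π/2. Then there exists no differentiable function λ : ℝ → ℝ such that (x, y, φ, λ) satisfies the vakonomic skate multiplier equations: ẍ − λ̇ sinφ − λ φ̇ cosφ = 1, ÿ + λ̇ cosφ − λ φ̇ sinφ = 0, φ̈ + λ(ẋ cosφ + ẏ sinφ) = 0 on ℝ. -/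
open Real

/-- For `v₀ ≠ 0` and `x(t) = 0`, `y(t) = v₀ t`, `φ(t) = π/2`, there is no
differentiable `λ : ℝ → ℝ` such that `(x, y, φ, λ)` satisfies the vakonomic skate
multiplier equations `ẍ − λ̇ sinφ − λ φ̇ cosφ = 1`, `ÿ + λ̇ cosφ − λ φ̇ sinφ = 0`,
`φ̈ + λ(ẋ cosφ + ẏ sinφ) = 0` on `ℝ`. -/
theorem stmt_12 (v₀ : ℝ) (hv : v₀ ≠ 0)
    (x y φ : ℝ → ℝ)
    (hxdef : x = fun _ => 0)
    (hydef : y = fun t => v₀ * t)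
    (hφdef : φ = fun _ => π / 2) :
    ¬ ∃ l : ℝ → ℝ, Differentiable ℝ l ∧
      (∀ t, deriv (deriv x) t - deriv l t * sin (φ t)
        - l t * deriv φ t * cos (φ t) = 1) ∧
      (∀ t, deriv (deriv y) t + deriv l t * cos (φ t)
        - l t * deriv φ t * sin (φ t) = 0) ∧
      (∀ t, deriv (deriv φ) t
        + l t * (deriv x t * cos (φ t) + deriv y t * sin (φ t)) = 0) := by
  rintro ⟨l, hl, h1, _, h3⟩
  subst hxdef hydef hφdef
  have hdx : deriv (fun _ : ℝ => (0:ℝ)) = fun _ => 0 := by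
    ext t; simp
  have hdy : deriv (fun t : ℝ => v₀ * t) = fun _ : ℝ => v₀ := by
    ext t; simpa using ((hasDerivAt_id t).const_mul v₀).deriv
  have hdφ : deriv (fun _ : ℝ => π / 2) = fun _ : ℝ => 0 := by
    ext t; simp
  -- l t = 0 for all t
  have hl0 : ∀ t, l t = 0 := by
    intro t
    have := h3 t
    rw [hdφ, hdx, hdy] at this
    simp [Real.sin_pi_div_two] at this
    rcases this with h | h
    · exact h
    · exact absurd h hv
  have hlz : l = fun _ => 0 := funext hl0
  have := h1 0
  rw [hdφ, hlz] at this
  simp [Real.sin_pi_div_two] at this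
end

section
/- Let x, y, φ, λ : ℝ → ℝ be infinitely differentiable functions satisfying the vakonomic skate system, with initial conditions x(0) = y(0) = 0, φ(0) = π/2, ẋ(0) = 0, ẏ(0) = v₀, φ̇(0) = 0, λ(0) = λ₀, where v₀ ≠ 0 and λ₀ ≠ 0. Then ẍ(0) = 0, φ̈(0) = −λ₀ v₀, and the third derivative x⁽³⁾(0) = λ₀ v₀². -/
open Real


private lemma aux_deriv_diff (f : ℝ → ℝ) (h : ContDiff ℝ (⊤ : ℕ∞) f) :
    Differentiable ℝ (deriv f) :=
  (((h.of_le (by simp) : ContDiff ℝ (↑(⊤:ℕ∞)) f).iterate_deriv 1)).differentiable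
    (by simp)

/-- For smooth `x, y, φ, λ` satisfying the vakonomic skate system with
initial conditions `x(0) = y(0) = 0`, `φ(0) = π/2`, `ẋ(0) = 0`, `ẏ(0) = v₀`,
`φ̇(0) = 0`, `λ(0) = λ₀` where `v₀ ≠ 0` and `λ₀ ≠ 0`, we have `ẍ(0) = 0`,
`φ̈(0) = −λ₀ v₀` and `x⁽³⁾(0) = λ₀ v₀²`. -/
theorem stmt_13 (v₀ lam₀ : ℝ) (hv : v₀ ≠ 0) (hlam : lam₀ ≠ 0)
    (x y φ l : ℝ → ℝ)
    (hx : ContDiff ℝ (⊤ : ℕ∞) x) (hy : ContDiff ℝ (⊤ : ℕ∞) y)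
    (hφ : ContDiff ℝ (⊤ : ℕ∞) φ) (hl : ContDiff ℝ (⊤ : ℕ∞) l)
    (heqx : ∀ t, deriv (deriv x) t =
      -(deriv φ t) * sin (φ t) * (deriv x t * cos (φ t) + deriv y t * sin (φ t))
        + l t * deriv φ t * cos (φ t) + cos (φ t) ^ 2)
    (heqy : ∀ t, deriv (deriv y) t =
      deriv φ t * cos (φ t) * (deriv x t * cos (φ t) + deriv y t * sin (φ t))
        + l t * deriv φ t * sin (φ t) + sin (φ t) * cos (φ t))
    (heqφ : ∀ t, deriv (deriv φ) t =
      -(l t) * (deriv x t * cos (φ t) + deriv y t * sin (φ t)))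
    (heql : ∀ t, deriv l t =
      -sin (φ t) - deriv φ t * (deriv x t * cos (φ t) + deriv y t * sin (φ t)))
    (hx0 : x 0 = 0) (hy0 : y 0 = 0) (hφ0 : φ 0 = π / 2)
    (hx0' : deriv x 0 = 0) (hy0' : deriv y 0 = v₀) (hφ0' : deriv φ 0 = 0)
    (hl0 : l 0 = lam₀) :
    deriv (deriv x) 0 = 0 ∧
    deriv (deriv φ) 0 = -lam₀ * v₀ ∧
    iteratedDeriv 3 x 0 = lam₀ * v₀ ^ 2 := by

  have hsin : sin (φ 0) = 1 := by rw [hφ0]; simp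
  have hcos : cos (φ 0) = 0 := by rw [hφ0]; simp
  have hxx : deriv (deriv x) 0 = 0 := by
    rw [heqx 0, hφ0', hcos]; ring
  have hyy : deriv (deriv y) 0 = 0 := by
    rw [heqy 0, hφ0', hcos]; ring
  have hφφ : deriv (deriv φ) 0 = -lam₀ * v₀ := by
    rw [heqφ 0, hx0', hy0', hl0, hcos, hsin]; ring
  have hll : deriv l 0 = -1 := by
    rw [heql 0, hφ0', hsin]; ring
  refine ⟨hxx, hφφ, ?_⟩
  -- differentiability facts
  have Hφ : HasDerivAt φ (deriv φ 0) 0 := ((hφ.differentiable (by simp)) 0).hasDerivAt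
  have Hφ' : HasDerivAt (deriv φ) (deriv (deriv φ) 0) 0 :=
    (aux_deriv_diff φ hφ 0).hasDerivAt
  have Hx' : HasDerivAt (deriv x) (deriv (deriv x) 0) 0 :=
    (aux_deriv_diff x hx 0).hasDerivAt
  have Hy' : HasDerivAt (deriv y) (deriv (deriv y) 0) 0 :=
    (aux_deriv_diff y hy 0).hasDerivAt
  have Hl : HasDerivAt l (deriv l 0) 0 := ((hl.differentiable (by simp)) 0).hasDerivAt
  have Hs : HasDerivAt (fun t => sin (φ t)) (cos (φ 0) * deriv φ 0) 0 :=
    (Real.hasDerivAt_sin (φ 0)).comp 0 Hφ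
  have Hc : HasDerivAt (fun t => cos (φ t)) (-sin (φ 0) * deriv φ 0) 0 :=
    (Real.hasDerivAt_cos (φ 0)).comp 0 Hφ
  have Hg := (((Hφ'.neg.mul Hs).mul ((Hx'.mul Hc).add (Hy'.mul Hs))).add
      ((Hl.mul Hφ').mul Hc)).add (Hc.pow 2)
  simp only [Pi.mul_apply, Pi.add_apply, Pi.neg_apply] at Hg
  change HasDerivAt (fun t =>
      -(deriv φ t) * sin (φ t) * (deriv x t * cos (φ t) + deriv y t * sin (φ t))
        + l t * deriv φ t * cos (φ t) + cos (φ t) ^ 2) _ 0 at Hg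
  have h3 : iteratedDeriv 3 x 0 = deriv (deriv (deriv x)) 0 := by
    simp [iteratedDeriv_succ, iteratedDeriv_zero]
  rw [h3, show deriv (deriv x) = fun t =>
      -(deriv φ t) * sin (φ t) * (deriv x t * cos (φ t) + deriv y t * sin (φ t))
        + l t * deriv φ t * cos (φ t) + cos (φ t) ^ 2 from funext heqx, Hg.deriv]
  rw [hφ0', hx0', hy0', hl0, hxx, hyy, hφφ, hll, hsin, hcos]
  ring
end

section
/- Let x, y, φ, λ : ℝ → ℝ be infinitely differentiable functions satisfying the vakonomic skate system, with initial conditions x(0) = y(0) = 0, φ(0) = π/2, ẋ(0) = 0, ẏ(0) = v₀, φ̇(0) = 0, λ(0) = λ₀, where v₀ ≠ 0 and λ₀ ≠ 0. Then x(t)/t³ → λ₀ v₀²/6 as t → 0; in particular there is δ > 0 such that x(t) has the sign of λ₀ for 0 < t < δ and the sign of −λ₀ for −δ < t < 0. -/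
open Real Filter

lemma aux_cube (f : ℝ → ℝ) (hf : ContDiff ℝ (⊤ : ℕ∞) f) (h0 : f 0 = 0)
    (h1 : deriv f 0 = 0) (h2 : deriv (deriv f) 0 = 0) :
    Tendsto (fun t => f t / t ^ 3) (nhdsWithin 0 {(0:ℝ)}ᶜ)
      (nhds (deriv (deriv (deriv f)) 0 / 6)) := by
  set D := deriv (deriv (deriv f)) 0 with hD
  have hdf : Differentiable ℝ f := hf.differentiable (by simp)
  have hf1 : ContDiff ℝ (⊤ : ℕ∞) (deriv f) := (contDiff_infty_iff_deriv.mp hf).2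
  have hf2 : ContDiff ℝ (⊤ : ℕ∞) (deriv (deriv f)) := (contDiff_infty_iff_deriv.mp hf1).2
  have hdf1 : Differentiable ℝ (deriv f) := hf1.differentiable (by simp)
  have hdf2 : Differentiable ℝ (deriv (deriv f)) := hf2.differentiable (by simp)
  have hslope : Tendsto (fun t => deriv (deriv f) t / t) (nhdsWithin 0 {(0:ℝ)}ᶜ) (nhds D) := by
    have h := (hdf2 0).hasDerivAt
    rw [hasDerivAt_iff_tendsto_slope] at h
    refine h.congr' ?_
    filter_upwards [self_mem_nhdsWithin] with t ht
    simp [slope_def_field, h2]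
  have h2div : Tendsto (fun t => deriv (deriv f) t / (6*t)) (nhdsWithin 0 {(0:ℝ)}ᶜ) (nhds (D/6)) := by
    have := hslope.div_const 6
    refine this.congr fun t => ?_
    rw [div_div, mul_comm]
  have hg2 : ∀ t : ℝ, deriv (fun s => 3*s^2) t = 6*t := by intro t; simp; ring
  have h1div : Tendsto (fun t => deriv f t / (3*t^2)) (nhdsWithin 0 {(0:ℝ)}ᶜ) (nhds (D/6)) := by
    apply deriv.lhopital_zero_nhdsNE (f := deriv f) (g := fun s => 3*s^2)
    · exact Eventually.of_forall fun t => hdf1 t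
    · filter_upwards [self_mem_nhdsWithin] with t ht
      rw [hg2]
      simpa using ht
    · have : Tendsto (deriv f) (nhdsWithin 0 {(0:ℝ)}ᶜ) (nhds (deriv f 0)) :=
        (hf1.continuous.tendsto 0).mono_left nhdsWithin_le_nhds
      rwa [h1] at this
    · have : Tendsto (fun t : ℝ => 3*t^2) (nhds 0) (nhds 0) := by
        have h := Continuous.tendsto (f := fun t : ℝ => 3*t^2) (by continuity) 0
        simpa using h
      exact this.mono_left nhdsWithin_le_nhds
    · refine h2div.congr fun t => ?_
      rw [hg2]
  have hg3 : ∀ t : ℝ, deriv (fun s : ℝ => s^3) t = 3*t^2 := by intro t; simp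
  apply deriv.lhopital_zero_nhdsNE (f := f) (g := fun s : ℝ => s^3)
  · exact Eventually.of_forall fun t => hdf t
  · filter_upwards [self_mem_nhdsWithin] with t ht
    rw [hg3]
    simp only [Set.mem_compl_iff, Set.mem_singleton_iff] at ht
    positivity
  · have : Tendsto f (nhdsWithin 0 {(0:ℝ)}ᶜ) (nhds (f 0)) :=
      (hf.continuous.tendsto 0).mono_left nhdsWithin_le_nhds
    rwa [h0] at this
  · have : Tendsto (fun t : ℝ => t^3) (nhds 0) (nhds 0) := by
      have h := Continuous.tendsto (f := fun t : ℝ => t^3) (by continuity) 0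
      simpa using h
    exact this.mono_left nhdsWithin_le_nhds
  · refine h1div.congr fun t => ?_
    rw [hg3]

/-- For smooth `x, y, φ, λ` satisfying the vakonomic skate system with
initial conditions `x(0) = y(0) = 0`, `φ(0) = π/2`, `ẋ(0) = 0`, `ẏ(0) = v₀`,
`φ̇(0) = 0`, `λ(0) = λ₀` where `v₀ ≠ 0` and `λ₀ ≠ 0`, we have
`x(t)/t³ → λ₀ v₀²/6` as `t → 0`; in particular there is `δ > 0` such that `x(t)` has
the sign of `λ₀` for `0 < t < δ` and the sign of `−λ₀` for `−δ < t < 0`. -/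
theorem stmt_14 (v₀ lam₀ : ℝ) (hv : v₀ ≠ 0) (hlam : lam₀ ≠ 0)
    (x y φ l : ℝ → ℝ)
    (hx : ContDiff ℝ (⊤ : ℕ∞) x) (hy : ContDiff ℝ (⊤ : ℕ∞) y)
    (hφ : ContDiff ℝ (⊤ : ℕ∞) φ) (hl : ContDiff ℝ (⊤ : ℕ∞) l)
    (heqx : ∀ t, deriv (deriv x) t =
      -(deriv φ t) * sin (φ t) * (deriv x t * cos (φ t) + deriv y t * sin (φ t))
        + l t * deriv φ t * cos (φ t) + cos (φ t) ^ 2)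
    (heqy : ∀ t, deriv (deriv y) t =
      deriv φ t * cos (φ t) * (deriv x t * cos (φ t) + deriv y t * sin (φ t))
        + l t * deriv φ t * sin (φ t) + sin (φ t) * cos (φ t))
    (heqφ : ∀ t, deriv (deriv φ) t =
      -(l t) * (deriv x t * cos (φ t) + deriv y t * sin (φ t)))
    (heql : ∀ t, deriv l t =
      -sin (φ t) - deriv φ t * (deriv x t * cos (φ t) + deriv y t * sin (φ t)))
    (hx0 : x 0 = 0) (hy0 : y 0 = 0) (hφ0 : φ 0 = π / 2)
    (hx0' : deriv x 0 = 0) (hy0' : deriv y 0 = v₀) (hφ0' : deriv φ 0 = 0)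
    (hl0 : l 0 = lam₀) :
    Tendsto (fun t => x t / t ^ 3) (nhdsWithin 0 {(0 : ℝ)}ᶜ)
      (nhds (lam₀ * v₀ ^ 2 / 6)) ∧
    ∃ δ > (0 : ℝ),
      (∀ t, 0 < t → t < δ → 0 < x t * lam₀) ∧
      (∀ t, -δ < t → t < 0 → x t * lam₀ < 0) := by

  -- downgrade smoothness
  have hx' : ContDiff ℝ (⊤ : ℕ∞) x := hx.of_le (by simp)
  have hy' : ContDiff ℝ (⊤ : ℕ∞) y := hy.of_le (by simp)
  have hφ' : ContDiff ℝ (⊤ : ℕ∞) φ := hφ.of_le (by simp)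
  have hl' : ContDiff ℝ (⊤ : ℕ∞) l := hl.of_le (by simp)
  have hx1 : ContDiff ℝ (⊤ : ℕ∞) (deriv x) := (contDiff_infty_iff_deriv.mp hx').2
  have hy1 : ContDiff ℝ (⊤ : ℕ∞) (deriv y) := (contDiff_infty_iff_deriv.mp hy').2
  have hφ1 : ContDiff ℝ (⊤ : ℕ∞) (deriv φ) := (contDiff_infty_iff_deriv.mp hφ').2
  have hone : (1:ℕ∞) ≤ (⊤:ℕ∞) := le_top
  have hdx1 : Differentiable ℝ (deriv x) := hx1.differentiable (by simp)
  have hdy1 : Differentiable ℝ (deriv y) := hy1.differentiable (by simp)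
  have hdφ1 : Differentiable ℝ (deriv φ) := hφ1.differentiable (by simp)
  have hdl : Differentiable ℝ l := hl'.differentiable (by simp)
  have hdφ : Differentiable ℝ φ := hφ'.differentiable (by simp)
  -- second derivatives at 0
  have hx2 : deriv (deriv x) 0 = 0 := by
    rw [heqx 0]; simp [hφ0, hφ0']
  have hy2 : deriv (deriv y) 0 = 0 := by
    rw [heqy 0]; simp [hφ0, hφ0']
  have hφ2 : deriv (deriv φ) 0 = -(lam₀ * v₀) := by
    rw [heqφ 0]; simp [hφ0, hφ0', hx0', hy0', hl0]
  -- derivative pieces at 0 (HasDerivAt)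
  have Hφ : HasDerivAt φ (deriv φ 0) 0 := (hdφ 0).hasDerivAt
  have Hφ1 : HasDerivAt (deriv φ) (deriv (deriv φ) 0) 0 := (hdφ1 0).hasDerivAt
  have Hx1 : HasDerivAt (deriv x) (deriv (deriv x) 0) 0 := (hdx1 0).hasDerivAt
  have Hy1 : HasDerivAt (deriv y) (deriv (deriv y) 0) 0 := (hdy1 0).hasDerivAt
  have Hl : HasDerivAt l (deriv l 0) 0 := (hdl 0).hasDerivAt
  have Hsin : HasDerivAt (fun t => sin (φ t)) (cos (φ 0) * deriv φ 0) 0 :=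
    (Real.hasDerivAt_sin (φ 0)).comp 0 Hφ
  have Hcos : HasDerivAt (fun t => cos (φ t)) (-sin (φ 0) * deriv φ 0) 0 :=
    (Real.hasDerivAt_cos (φ 0)).comp 0 Hφ
  have HU : HasDerivAt (fun t => deriv x t * cos (φ t) + deriv y t * sin (φ t))
      (deriv (deriv x) 0 * cos (φ 0) + deriv x 0 * (-sin (φ 0) * deriv φ 0)
        + (deriv (deriv y) 0 * sin (φ 0) + deriv y 0 * (cos (φ 0) * deriv φ 0))) 0 :=
    (Hx1.mul Hcos).add (Hy1.mul Hsin)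
  have HA : HasDerivAt (fun t => -(deriv φ t) * sin (φ t)
      * (deriv x t * cos (φ t) + deriv y t * sin (φ t)))
      ((-(deriv (deriv φ) 0) * sin (φ 0) + -(deriv φ 0) * (cos (φ 0) * deriv φ 0))
        * (deriv x 0 * cos (φ 0) + deriv y 0 * sin (φ 0))
       + (-(deriv φ 0) * sin (φ 0))
        * (deriv (deriv x) 0 * cos (φ 0) + deriv x 0 * (-sin (φ 0) * deriv φ 0)
          + (deriv (deriv y) 0 * sin (φ 0) + deriv y 0 * (cos (φ 0) * deriv φ 0)))) 0 :=
    (Hφ1.neg.mul Hsin).mul HU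
  have HB : HasDerivAt (fun t => l t * deriv φ t * cos (φ t))
      ((deriv l 0 * deriv φ 0 + l 0 * deriv (deriv φ) 0) * cos (φ 0)
        + (l 0 * deriv φ 0) * (-sin (φ 0) * deriv φ 0)) 0 :=
    (Hl.mul Hφ1).mul Hcos
  have HC : HasDerivAt (fun t => cos (φ t) ^ 2)
      (2 * cos (φ 0) ^ 1 * (-sin (φ 0) * deriv φ 0)) 0 := by
    simpa using Hcos.fun_pow 2
  have HF : HasDerivAt (fun t =>
      -(deriv φ t) * sin (φ t) * (deriv x t * cos (φ t) + deriv y t * sin (φ t))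
        + l t * deriv φ t * cos (φ t) + cos (φ t) ^ 2) _ 0 := (HA.add HB).add HC
  have hkey : deriv (deriv x) = fun t =>
      -(deriv φ t) * sin (φ t) * (deriv x t * cos (φ t) + deriv y t * sin (φ t))
        + l t * deriv φ t * cos (φ t) + cos (φ t) ^ 2 := funext heqx
  have hx3 : deriv (deriv (deriv x)) 0 = lam₀ * v₀ ^ 2 := by
    rw [hkey, HF.deriv]
    rw [hφ0, hφ0', hx0', hy0', hl0, hx2, hy2, hφ2]
    simp
    ring
  have htend : Tendsto (fun t => x t / t ^ 3) (nhdsWithin 0 {(0 : ℝ)}ᶜ)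
      (nhds (lam₀ * v₀ ^ 2 / 6)) := by
    have := aux_cube x hx' hx0 hx0' hx2
    rwa [hx3] at this
  refine ⟨htend, ?_⟩
  -- sign part
  have hpos : (0:ℝ) < lam₀ * v₀ ^ 2 / 6 * lam₀ := by
    have h1 : lam₀ * v₀ ^ 2 / 6 * lam₀ = lam₀ ^ 2 * v₀ ^ 2 / 6 := by ring
    rw [h1]
    positivity
  have hev : ∀ᶠ t in nhdsWithin 0 {(0 : ℝ)}ᶜ, 0 < x t / t ^ 3 * lam₀ :=
    (htend.mul_const lam₀).eventually (eventually_gt_nhds hpos)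
  rw [eventually_nhdsWithin_iff, Metric.eventually_nhds_iff] at hev
  obtain ⟨δ, hδ, hball⟩ := hev
  refine ⟨δ, hδ, ?_, ?_⟩
  · intro t ht htδ
    have hne : t ≠ 0 := ne_of_gt ht
    have hd : dist t 0 < δ := by
      rw [Real.dist_eq, sub_zero, abs_of_pos ht]; exact htδ
    have h := hball hd (by simpa using hne)
    have ht3 : (0:ℝ) < t ^ 3 := by positivity
    have := mul_pos h ht3
    calc (0:ℝ) < x t / t ^ 3 * lam₀ * t ^ 3 := this
      _ = x t * lam₀ := by field_simp
  · intro t ht htδ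
    have hne : t ≠ 0 := ne_of_lt htδ
    have hd : dist t 0 < δ := by
      rw [Real.dist_eq, sub_zero, abs_of_neg htδ]; linarith
    have h := hball hd (by simpa using hne)
    have ht3 : t ^ 3 < 0 := by
      have : t ^ 3 = t * t ^ 2 := by ring
      rw [this]
      exact mul_neg_of_neg_of_pos htδ (by positivity)
    have := mul_neg_of_pos_of_neg h ht3
    calc x t * lam₀ = x t / t ^ 3 * lam₀ * t ^ 3 := by field_simp
      _ < 0 := this
end

section
/- Let x, y, φ, λ : ℝ → ℝ be infinitely differentiable functions satisfying the vakonomic skate system, with initial conditions x(0) = y(0) = 0, φ(0) = π/2, ẋ(0) = 0, ẏ(0) = v₀, φ̇(0) = 0, λ(0) = 0, where v₀ ≠ 0. Then φ̈(0) = 0, φ⁽³⁾(0) = v₀, ẍ(0) = 0, x⁽³⁾(0) = 0, and x⁽⁴⁾(0) = −v₀². -/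
open Real

/-- For smooth `x, y, φ, λ` satisfying the vakonomic skate system with
initial conditions `x(0) = y(0) = 0`, `φ(0) = π/2`, `ẋ(0) = 0`, `ẏ(0) = v₀`,
`φ̇(0) = 0`, `λ(0) = 0` where `v₀ ≠ 0`, we have `φ̈(0) = 0`, `φ⁽³⁾(0) = v₀`,
`ẍ(0) = 0`, `x⁽³⁾(0) = 0` and `x⁽⁴⁾(0) = −v₀²`. -/
theorem stmt_15 (v₀ : ℝ) (hv : v₀ ≠ 0)
    (x y φ l : ℝ → ℝ)
    (hx : ContDiff ℝ (⊤ : ℕ∞) x) (hy : ContDiff ℝ (⊤ : ℕ∞) y)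
    (hφ : ContDiff ℝ (⊤ : ℕ∞) φ) (hl : ContDiff ℝ (⊤ : ℕ∞) l)
    (heqx : ∀ t, deriv (deriv x) t =
      -(deriv φ t) * sin (φ t) * (deriv x t * cos (φ t) + deriv y t * sin (φ t))
        + l t * deriv φ t * cos (φ t) + cos (φ t) ^ 2)
    (heqy : ∀ t, deriv (deriv y) t =
      deriv φ t * cos (φ t) * (deriv x t * cos (φ t) + deriv y t * sin (φ t))
        + l t * deriv φ t * sin (φ t) + sin (φ t) * cos (φ t))
    (heqφ : ∀ t, deriv (deriv φ) t =
      -(l t) * (deriv x t * cos (φ t) + deriv y t * sin (φ t)))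
    (heql : ∀ t, deriv l t =
      -sin (φ t) - deriv φ t * (deriv x t * cos (φ t) + deriv y t * sin (φ t)))
    (hx0 : x 0 = 0) (hy0 : y 0 = 0) (hφ0 : φ 0 = π / 2)
    (hx0' : deriv x 0 = 0) (hy0' : deriv y 0 = v₀) (hφ0' : deriv φ 0 = 0)
    (hl0 : l 0 = 0) :
    deriv (deriv φ) 0 = 0 ∧
    iteratedDeriv 3 φ 0 = v₀ ∧
    deriv (deriv x) 0 = 0 ∧
    iteratedDeriv 3 x 0 = 0 ∧
    iteratedDeriv 4 x 0 = -v₀ ^ 2 := by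
  have hone : ((⊤:ℕ∞) : WithTop ℕ∞) ≠ 0 := by simp
  -- smoothness of derivatives
  have hxc1 : ContDiff ℝ ((⊤:ℕ∞) : WithTop ℕ∞) (deriv x) :=
    (contDiff_infty_iff_deriv.mp (hx.of_le (by simp))).2
  have hyc1 : ContDiff ℝ ((⊤:ℕ∞) : WithTop ℕ∞) (deriv y) :=
    (contDiff_infty_iff_deriv.mp (hy.of_le (by simp))).2
  have hφc1 : ContDiff ℝ ((⊤:ℕ∞) : WithTop ℕ∞) (deriv φ) :=
    (contDiff_infty_iff_deriv.mp (hφ.of_le (by simp))).2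
  have hlc1 : ContDiff ℝ ((⊤:ℕ∞) : WithTop ℕ∞) (deriv l) :=
    (contDiff_infty_iff_deriv.mp (hl.of_le (by simp))).2
  have hxc2 : ContDiff ℝ ((⊤:ℕ∞) : WithTop ℕ∞) (deriv (deriv x)) :=
    (contDiff_infty_iff_deriv.mp hxc1).2
  have hyc2 : ContDiff ℝ ((⊤:ℕ∞) : WithTop ℕ∞) (deriv (deriv y)) :=
    (contDiff_infty_iff_deriv.mp hyc1).2
  have hφc2 : ContDiff ℝ ((⊤:ℕ∞) : WithTop ℕ∞) (deriv (deriv φ)) :=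
    (contDiff_infty_iff_deriv.mp hφc1).2
  -- HasDerivAt facts
  have Hx : ∀ t, HasDerivAt x (deriv x t) t :=
    fun t => ((hx.differentiable (by simp)) t).hasDerivAt
  have Hy : ∀ t, HasDerivAt y (deriv y t) t :=
    fun t => ((hy.differentiable (by simp)) t).hasDerivAt
  have Hφ : ∀ t, HasDerivAt φ (deriv φ t) t :=
    fun t => ((hφ.differentiable (by simp)) t).hasDerivAt
  have Hl : ∀ t, HasDerivAt l (deriv l t) t :=
    fun t => ((hl.differentiable (by simp)) t).hasDerivAt
  have Hx1 : ∀ t, HasDerivAt (deriv x) (deriv (deriv x) t) t :=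
    fun t => ((hxc1.differentiable hone) t).hasDerivAt
  have Hy1 : ∀ t, HasDerivAt (deriv y) (deriv (deriv y) t) t :=
    fun t => ((hyc1.differentiable hone) t).hasDerivAt
  have Hφ1 : ∀ t, HasDerivAt (deriv φ) (deriv (deriv φ) t) t :=
    fun t => ((hφc1.differentiable hone) t).hasDerivAt
  have Hl1 : ∀ t, HasDerivAt (deriv l) (deriv (deriv l) t) t :=
    fun t => ((hlc1.differentiable hone) t).hasDerivAt
  have Hx2 : ∀ t, HasDerivAt (deriv (deriv x)) (deriv (deriv (deriv x)) t) t :=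
    fun t => ((hxc2.differentiable hone) t).hasDerivAt
  have Hy2 : ∀ t, HasDerivAt (deriv (deriv y)) (deriv (deriv (deriv y)) t) t :=
    fun t => ((hyc2.differentiable hone) t).hasDerivAt
  have Hφ2 : ∀ t, HasDerivAt (deriv (deriv φ)) (deriv (deriv (deriv φ)) t) t :=
    fun t => ((hφc2.differentiable hone) t).hasDerivAt
  -- values at 0 of second derivatives
  have hs0 : sin (φ 0) = 1 := by rw [hφ0, sin_pi_div_two]
  have hc0 : cos (φ 0) = 0 := by rw [hφ0, cos_pi_div_two]
  have hφ2v : deriv (deriv φ) 0 = 0 := by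
    rw [heqφ 0, hl0]; ring
  have hx2v : deriv (deriv x) 0 = 0 := by
    rw [heqx 0, hφ0', hl0, hc0]; ring
  have hy2v : deriv (deriv y) 0 = 0 := by
    rw [heqy 0, hφ0', hl0, hs0, hc0]; ring
  have hl1v : deriv l 0 = -1 := by
    rw [heql 0, hφ0', hs0]; ring
  -- third derivative of φ
  have H1φ : ∀ t, HasDerivAt
      (fun s => -(l s) * (deriv x s * cos (φ s) + deriv y s * sin (φ s)))
      (-(deriv l t) * (deriv x t * cos (φ t) + deriv y t * sin (φ t))
        + -(l t) * (deriv (deriv x) t * cos (φ t) - deriv x t * sin (φ t) * deriv φ t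
            + deriv (deriv y) t * sin (φ t) + deriv y t * cos (φ t) * deriv φ t)) t := by
    intro t
    have h := (Hl t).neg.mul
      ((((Hx1 t).mul (Hφ t).cos).add ((Hy1 t).mul (Hφ t).sin)))
    refine h.congr_deriv ?_
    simp only [Pi.mul_apply, Pi.add_apply, Pi.neg_apply, Pi.sub_apply, Pi.pow_apply]
    ring
  have hfφ : deriv (deriv φ) =
      fun s => -(l s) * (deriv x s * cos (φ s) + deriv y s * sin (φ s)) := funext heqφ
  have hφ3 : ∀ t, deriv (deriv (deriv φ)) t =
      -(deriv l t) * (deriv x t * cos (φ t) + deriv y t * sin (φ t))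
        + -(l t) * (deriv (deriv x) t * cos (φ t) - deriv x t * sin (φ t) * deriv φ t
            + deriv (deriv y) t * sin (φ t) + deriv y t * cos (φ t) * deriv φ t) := by
    intro t
    rw [hfφ]
    exact (H1φ t).deriv
  have hφ3v : deriv (deriv (deriv φ)) 0 = v₀ := by
    rw [hφ3 0, hl1v, hl0, hx0', hy0', hφ0', hs0, hc0]; ring
  -- third derivative of x
  have H1x : ∀ t, HasDerivAt
      (fun s => -(deriv φ s) * sin (φ s) * (deriv x s * cos (φ s) + deriv y s * sin (φ s))
        + l s * deriv φ s * cos (φ s) + cos (φ s) ^ 2)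
      ((-(deriv (deriv φ) t) * sin (φ t) - deriv φ t ^ 2 * cos (φ t))
          * (deriv x t * cos (φ t) + deriv y t * sin (φ t))
        + -(deriv φ t) * sin (φ t)
          * (deriv (deriv x) t * cos (φ t) - deriv x t * sin (φ t) * deriv φ t
            + deriv (deriv y) t * sin (φ t) + deriv y t * cos (φ t) * deriv φ t)
        + (deriv l t * deriv φ t * cos (φ t) + l t * deriv (deriv φ) t * cos (φ t)
            - l t * deriv φ t ^ 2 * sin (φ t))
        - 2 * cos (φ t) * sin (φ t) * deriv φ t) t := by
    intro t
    have h := ((((Hφ1 t).neg.mul (Hφ t).sin).mul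
        (((Hx1 t).mul (Hφ t).cos).add ((Hy1 t).mul (Hφ t).sin))).add
        (((Hl t).mul (Hφ1 t)).mul (Hφ t).cos)).add ((Hφ t).cos.pow 2)
    refine h.congr_deriv ?_
    simp only [Pi.mul_apply, Pi.add_apply, Pi.neg_apply, Pi.sub_apply, Pi.pow_apply]
    push_cast
    ring
  have hfx : deriv (deriv x) =
      fun s => -(deriv φ s) * sin (φ s) * (deriv x s * cos (φ s) + deriv y s * sin (φ s))
        + l s * deriv φ s * cos (φ s) + cos (φ s) ^ 2 := funext heqx
  have hx3 : ∀ t, deriv (deriv (deriv x)) t =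
      (-(deriv (deriv φ) t) * sin (φ t) - deriv φ t ^ 2 * cos (φ t))
          * (deriv x t * cos (φ t) + deriv y t * sin (φ t))
        + -(deriv φ t) * sin (φ t)
          * (deriv (deriv x) t * cos (φ t) - deriv x t * sin (φ t) * deriv φ t
            + deriv (deriv y) t * sin (φ t) + deriv y t * cos (φ t) * deriv φ t)
        + (deriv l t * deriv φ t * cos (φ t) + l t * deriv (deriv φ) t * cos (φ t)
            - l t * deriv φ t ^ 2 * sin (φ t))
        - 2 * cos (φ t) * sin (φ t) * deriv φ t := by
    intro t
    conv_lhs => rw [hfx]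
    exact (H1x t).deriv
  have hx3v : deriv (deriv (deriv x)) 0 = 0 := by
    rw [hx3 0, hφ2v, hφ0', hl0, hc0]; ring
  -- fourth derivative of x
  have H2x : HasDerivAt
      (fun t => (-(deriv (deriv φ) t) * sin (φ t) - deriv φ t ^ 2 * cos (φ t))
          * (deriv x t * cos (φ t) + deriv y t * sin (φ t))
        + -(deriv φ t) * sin (φ t)
          * (deriv (deriv x) t * cos (φ t) - deriv x t * sin (φ t) * deriv φ t
            + deriv (deriv y) t * sin (φ t) + deriv y t * cos (φ t) * deriv φ t)
        + (deriv l t * deriv φ t * cos (φ t) + l t * deriv (deriv φ) t * cos (φ t)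
            - l t * deriv φ t ^ 2 * sin (φ t))
        - 2 * cos (φ t) * sin (φ t) * deriv φ t) (-v₀ ^ 2) 0 := by
    have Hs := (Hφ 0).sin
    have Hc := (Hφ 0).cos
    have Hu := ((Hx1 0).mul Hc).add ((Hy1 0).mul Hs)
    have Hu' := ((((Hx2 0).mul Hc).sub (((Hx1 0).mul Hs).mul (Hφ1 0))).add
        ((Hy2 0).mul Hs)).add (((Hy1 0).mul Hc).mul (Hφ1 0))
    have h := (((((Hφ2 0).neg.mul Hs).sub (((Hφ1 0).pow 2).mul Hc)).mul Hu).add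
        (((Hφ1 0).neg.mul Hs).mul Hu')).add
        (((((Hl1 0).mul (Hφ1 0)).mul Hc).add (((Hl 0).mul (Hφ2 0)).mul Hc)).sub
          (((Hl 0).mul ((Hφ1 0).pow 2)).mul Hs)) |>.sub
        (((Hc.const_mul 2).mul Hs).mul (Hφ1 0))
    refine h.congr_deriv ?_
    simp only [Pi.mul_apply, Pi.add_apply, Pi.neg_apply, Pi.sub_apply, Pi.pow_apply]
    rw [hφ0', hx0', hy0', hl0, hl1v, hx2v, hy2v, hφ2v, hx3v, hφ3v, hs0, hc0]
    push_cast
    ring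
  refine ⟨hφ2v, ?_, hx2v, ?_, ?_⟩
  · rw [show (3 : ℕ) = 2 + 1 from rfl, iteratedDeriv_succ,
      show (2 : ℕ) = 1 + 1 from rfl, iteratedDeriv_succ, iteratedDeriv_one]
    exact hφ3v
  · rw [show (3 : ℕ) = 2 + 1 from rfl, iteratedDeriv_succ,
      show (2 : ℕ) = 1 + 1 from rfl, iteratedDeriv_succ, iteratedDeriv_one]
    exact hx3v
  · rw [show (4 : ℕ) = 3 + 1 from rfl, iteratedDeriv_succ,
      show (3 : ℕ) = 2 + 1 from rfl, iteratedDeriv_succ,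
      show (2 : ℕ) = 1 + 1 from rfl, iteratedDeriv_succ, iteratedDeriv_one,
      funext hx3]
    exact H2x.deriv
end

section
/- Let x, y, φ, λ : ℝ → ℝ be infinitely differentiable functions satisfying the vakonomic skate system, with initial conditions x(0) = y(0) = 0, φ(0) = π/2, ẋ(0) = 0, ẏ(0) = v₀, φ̇(0) = 0, λ(0) = 0, where v₀ ≠ 0. Then x(t)/t⁴ → −v₀²/24 as t → 0; in particular there is δ > 0 such that x(t) < 0 for all t with 0 < |t| < δ. -/
open Real Filter

lemma quartic_limit {f : ℝ → ℝ} (hf : ContDiff ℝ (⊤ : ℕ∞) f)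
    (h0 : f 0 = 0) (h1 : deriv f 0 = 0) (h2 : deriv (deriv f) 0 = 0)
    (h3 : deriv (deriv (deriv f)) 0 = 0) {A : ℝ}
    (h4 : deriv (deriv (deriv (deriv f))) 0 = A) :
    Tendsto (fun t => f t / t ^ 4) (nhdsWithin 0 {(0:ℝ)}ᶜ) (nhds (A / 24)) := by
  have hf1 : ContDiff ℝ (⊤ : ℕ∞) (deriv f) := (contDiff_infty_iff_deriv.mp hf).2
  have hf2 : ContDiff ℝ (⊤ : ℕ∞) (deriv (deriv f)) := (contDiff_infty_iff_deriv.mp hf1).2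
  have hf3 : ContDiff ℝ (⊤ : ℕ∞) (deriv (deriv (deriv f))) := (contDiff_infty_iff_deriv.mp hf2).2
  have df := hf.differentiable (by simp)
  have df1 := hf1.differentiable (by simp)
  have df2 := hf2.differentiable (by simp)
  have df3 := hf3.differentiable (by simp)
  have c0 : Continuous f := hf.continuous
  have c1 : Continuous (deriv f) := hf1.continuous
  have c2 : Continuous (deriv (deriv f)) := hf2.continuous
  have c3 : Continuous (deriv (deriv (deriv f))) := hf3.continuous
  have L4 : Tendsto (fun t => deriv (deriv (deriv f)) t / (24 * t))
      (nhdsWithin 0 {(0:ℝ)}ᶜ) (nhds (A / 24)) := by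
    have hd : HasDerivAt (deriv (deriv (deriv f))) A 0 := by
      rw [← h4]; exact (df3 0).hasDerivAt
    have hslope := hasDerivAt_iff_tendsto_slope.mp hd
    have h24 := hslope.div_const 24
    refine h24.congr (fun t => ?_)
    simp [slope_def_field, h3, div_div]
    ring_nf
  have L3 : Tendsto (fun t => deriv (deriv f) t / (12 * t ^ 2))
      (nhdsWithin 0 {(0:ℝ)}ᶜ) (nhds (A / 24)) := by
    apply deriv.lhopital_zero_nhdsNE (g := fun t => 12 * t ^ 2)
    · exact Eventually.of_forall fun t => df2 t
    · filter_upwards [self_mem_nhdsWithin] with t (ht : t ≠ 0)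
      have : deriv (fun t : ℝ => 12 * t ^ 2) t = 24 * t := by
        simp; ring
      rw [this]
      simp [ht]
    · have : Tendsto (deriv (deriv f)) (nhds (0:ℝ)) (nhds 0) := by
        have := c2.tendsto 0; rwa [h2] at this
      exact this.mono_left nhdsWithin_le_nhds
    · have : Tendsto (fun t : ℝ => 12 * t ^ 2) (nhds (0:ℝ)) (nhds 0) := by
        simpa using (by fun_prop : Continuous (fun t : ℝ => 12 * t ^ 2)).tendsto (0:ℝ)
      exact this.mono_left nhdsWithin_le_nhds
    · refine L4.congr (fun t => ?_)
      have : deriv (fun t : ℝ => 12 * t ^ 2) t = 24 * t := by simp; ring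
      rw [this]
  have L2 : Tendsto (fun t => deriv f t / (4 * t ^ 3))
      (nhdsWithin 0 {(0:ℝ)}ᶜ) (nhds (A / 24)) := by
    apply deriv.lhopital_zero_nhdsNE (g := fun t => 4 * t ^ 3)
    · exact Eventually.of_forall fun t => df1 t
    · filter_upwards [self_mem_nhdsWithin] with t (ht : t ≠ 0)
      have : deriv (fun t : ℝ => 4 * t ^ 3) t = 12 * t ^ 2 := by simp; ring
      rw [this]
      positivity
    · have : Tendsto (deriv f) (nhds (0:ℝ)) (nhds 0) := by
        have := c1.tendsto 0; rwa [h1] at this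
      exact this.mono_left nhdsWithin_le_nhds
    · have : Tendsto (fun t : ℝ => 4 * t ^ 3) (nhds (0:ℝ)) (nhds 0) := by
        simpa using (by fun_prop : Continuous (fun t : ℝ => 4 * t ^ 3)).tendsto (0:ℝ)
      exact this.mono_left nhdsWithin_le_nhds
    · refine L3.congr (fun t => ?_)
      have : deriv (fun t : ℝ => 4 * t ^ 3) t = 12 * t ^ 2 := by simp; ring
      rw [this]
  apply deriv.lhopital_zero_nhdsNE (g := fun t => t ^ 4)
  · exact Eventually.of_forall fun t => df t
  · filter_upwards [self_mem_nhdsWithin] with t (ht : t ≠ 0)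
    have : deriv (fun t : ℝ => t ^ 4) t = 4 * t ^ 3 := by simp
    rw [this]
    positivity
  · have : Tendsto f (nhds (0:ℝ)) (nhds 0) := by have := c0.tendsto 0; rwa [h0] at this
    exact this.mono_left nhdsWithin_le_nhds
  · have : Tendsto (fun t : ℝ => t ^ 4) (nhds (0:ℝ)) (nhds 0) := by
      simpa using (continuous_pow 4).tendsto (0:ℝ)
    exact this.mono_left nhdsWithin_le_nhds
  · refine L2.congr (fun t => ?_)
    have : deriv (fun t : ℝ => t ^ 4) t = 4 * t ^ 3 := by simp
    rw [this]


/-- For smooth `x, y, φ, λ` satisfying the vakonomic skate system with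
initial conditions `x(0) = y(0) = 0`, `φ(0) = π/2`, `ẋ(0) = 0`, `ẏ(0) = v₀`,
`φ̇(0) = 0`, `λ(0) = 0` where `v₀ ≠ 0`, we have `x(t)/t⁴ → −v₀²/24` as `t → 0`;
in particular there is `δ > 0` such that `x(t) < 0` for all `t` with `0 < |t| < δ`. -/
theorem stmt_16 (v₀ : ℝ) (hv : v₀ ≠ 0)
    (x y φ l : ℝ → ℝ)
    (hx : ContDiff ℝ (⊤ : ℕ∞) x) (hy : ContDiff ℝ (⊤ : ℕ∞) y)
    (hφ : ContDiff ℝ (⊤ : ℕ∞) φ) (hl : ContDiff ℝ (⊤ : ℕ∞) l)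
    (heqx : ∀ t, deriv (deriv x) t =
      -(deriv φ t) * sin (φ t) * (deriv x t * cos (φ t) + deriv y t * sin (φ t))
        + l t * deriv φ t * cos (φ t) + cos (φ t) ^ 2)
    (heqy : ∀ t, deriv (deriv y) t =
      deriv φ t * cos (φ t) * (deriv x t * cos (φ t) + deriv y t * sin (φ t))
        + l t * deriv φ t * sin (φ t) + sin (φ t) * cos (φ t))
    (heqφ : ∀ t, deriv (deriv φ) t =
      -(l t) * (deriv x t * cos (φ t) + deriv y t * sin (φ t)))
    (heql : ∀ t, deriv l t =
      -sin (φ t) - deriv φ t * (deriv x t * cos (φ t) + deriv y t * sin (φ t)))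
    (hx0 : x 0 = 0) (hy0 : y 0 = 0) (hφ0 : φ 0 = π / 2)
    (hx0' : deriv x 0 = 0) (hy0' : deriv y 0 = v₀) (hφ0' : deriv φ 0 = 0)
    (hl0 : l 0 = 0) :
    Tendsto (fun t => x t / t ^ 4) (nhdsWithin 0 {(0 : ℝ)}ᶜ)
      (nhds (-v₀ ^ 2 / 24)) ∧
    ∃ δ > (0 : ℝ), ∀ t : ℝ, t ≠ 0 → |t| < δ → x t < 0 := by
  -- smoothness bookkeeping
  have hX : ContDiff ℝ (⊤ : ℕ∞) x := hx.of_le (by simp)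
  have hY : ContDiff ℝ (⊤ : ℕ∞) y := hy.of_le (by simp)
  have hΦ : ContDiff ℝ (⊤ : ℕ∞) φ := hφ.of_le (by simp)
  have hL : ContDiff ℝ (⊤ : ℕ∞) l := hl.of_le (by simp)
  have hX1 : ContDiff ℝ (⊤ : ℕ∞) (deriv x) := (contDiff_infty_iff_deriv.mp hX).2
  have hX2 : ContDiff ℝ (⊤ : ℕ∞) (deriv (deriv x)) := (contDiff_infty_iff_deriv.mp hX1).2
  have hY1 : ContDiff ℝ (⊤ : ℕ∞) (deriv y) := (contDiff_infty_iff_deriv.mp hY).2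
  have hY2 : ContDiff ℝ (⊤ : ℕ∞) (deriv (deriv y)) := (contDiff_infty_iff_deriv.mp hY1).2
  have hΦ1 : ContDiff ℝ (⊤ : ℕ∞) (deriv φ) := (contDiff_infty_iff_deriv.mp hΦ).2
  have hΦ2 : ContDiff ℝ (⊤ : ℕ∞) (deriv (deriv φ)) := (contDiff_infty_iff_deriv.mp hΦ1).2
  have hL1 : ContDiff ℝ (⊤ : ℕ∞) (deriv l) := (contDiff_infty_iff_deriv.mp hL).2
  have one_le : (1 : WithTop ℕ∞) ≤ ((⊤ : ℕ∞) : WithTop ℕ∞) := by exact_mod_cast le_top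
  have dX1 : Differentiable ℝ (deriv x) := hX1.differentiable (by simp)
  have dX2 : Differentiable ℝ (deriv (deriv x)) := hX2.differentiable (by simp)
  have dY1 : Differentiable ℝ (deriv y) := hY1.differentiable (by simp)
  have dY2 : Differentiable ℝ (deriv (deriv y)) := hY2.differentiable (by simp)
  have dΦ : Differentiable ℝ φ := hΦ.differentiable (by simp)
  have dΦ1 : Differentiable ℝ (deriv φ) := hΦ1.differentiable (by simp)
  have dΦ2 : Differentiable ℝ (deriv (deriv φ)) := hΦ2.differentiable (by simp)
  have dL : Differentiable ℝ l := hL.differentiable (by simp)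
  have dL1 : Differentiable ℝ (deriv l) := hL1.differentiable (by simp)
  -- derivatives of sin ∘ φ and cos ∘ φ
  have hsin : ∀ t, HasDerivAt (fun s => Real.sin (φ s)) (Real.cos (φ t) * deriv φ t) t :=
    fun t => (Real.hasDerivAt_sin (φ t)).comp t (dΦ t).hasDerivAt
  have hcos : ∀ t, HasDerivAt (fun s => Real.cos (φ s)) (-Real.sin (φ t) * deriv φ t) t :=
    fun t => (Real.hasDerivAt_cos (φ t)).comp t (dΦ t).hasDerivAt
  -- derivative of u = x' cos φ + y' sin φ
  have hu : ∀ t, HasDerivAt (fun s => deriv x s * Real.cos (φ s) + deriv y s * Real.sin (φ s))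
      (deriv (deriv x) t * Real.cos (φ t) + deriv x t * (-Real.sin (φ t) * deriv φ t)
        + (deriv (deriv y) t * Real.sin (φ t) + deriv y t * (Real.cos (φ t) * deriv φ t))) t :=
    fun t => ((dX1 t).hasDerivAt.mul (hcos t)).add ((dY1 t).hasDerivAt.mul (hsin t))
  -- values at 0
  have hc0 : Real.cos (φ 0) = 0 := by rw [hφ0]; exact Real.cos_pi_div_two
  have hs0 : Real.sin (φ 0) = 1 := by rw [hφ0]; exact Real.sin_pi_div_two
  have hx2_0 : deriv (deriv x) 0 = 0 := by rw [heqx 0]; simp [hc0, hφ0', hl0]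
  have hy2_0 : deriv (deriv y) 0 = 0 := by rw [heqy 0]; simp [hc0, hφ0', hl0]
  have hφ2_0 : deriv (deriv φ) 0 = 0 := by rw [heqφ 0]; simp [hl0]
  have hl1_0 : deriv l 0 = -1 := by rw [heql 0]; simp [hs0, hφ0']
  -- third derivative of φ at 0
  have hG := (((dL 0).hasDerivAt.neg).mul (hu 0)).congr_of_eventuallyEq
      (f₁ := deriv (deriv φ)) (Filter.Eventually.of_forall fun s => by rw [heqφ s]; rfl)
  have hφ3_0 : deriv (deriv (deriv φ)) 0 = v₀ := by
    rw [hG.deriv]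
    simp [hc0, hs0, hl0, hl1_0, hx0', hy0', hφ0', hx2_0, hy2_0]
  -- third derivative of x: symbolic expression valid for all t
  have hF' := fun t : ℝ =>
    (((((dΦ1 t).hasDerivAt.neg.mul (hsin t)).mul (hu t)).add
        (((dL t).hasDerivAt.mul (dΦ1 t).hasDerivAt).mul (hcos t))).add
        ((hcos t).mul (hcos t))).congr_of_eventuallyEq
      (f₁ := deriv (deriv x)) (Filter.Eventually.of_forall fun s => by rw [heqx s]; simp only [Pi.mul_apply, Pi.add_apply, Pi.neg_apply, Pi.pow_apply]; ring)
  have hx3_0 : deriv (deriv (deriv x)) 0 = 0 := by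
    rw [(hF' 0).deriv]
    simp [hc0, hs0, hl0, hφ0', hφ2_0]
  -- fourth derivative of x at 0
  have hx4_0 : deriv (deriv (deriv (deriv x))) 0 = -v₀ ^ 2 := by
    have hA1 := (((dΦ2 0).hasDerivAt.neg.mul (hsin 0)).add
        (((dΦ1 0).hasDerivAt.neg).mul ((hcos 0).mul (dΦ1 0).hasDerivAt))).mul (hu 0)
    have hUp := (((dX2 0).hasDerivAt.mul (hcos 0)).add
        ((dX1 0).hasDerivAt.mul (((hsin 0).neg).mul (dΦ1 0).hasDerivAt))).add
      (((dY2 0).hasDerivAt.mul (hsin 0)).add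
        ((dY1 0).hasDerivAt.mul ((hcos 0).mul (dΦ1 0).hasDerivAt)))
    have hA2 := (((dΦ1 0).hasDerivAt.neg.mul (hsin 0)).mul hUp)
    have hB1 := ((((dL1 0).hasDerivAt.mul (dΦ1 0).hasDerivAt).add
        ((dL 0).hasDerivAt.mul (dΦ2 0).hasDerivAt)).mul (hcos 0))
    have hB2 := (((dL 0).hasDerivAt.mul (dΦ1 0).hasDerivAt).mul
        (((hsin 0).neg).mul (dΦ1 0).hasDerivAt))
    have hC := ((((hsin 0).neg).mul (dΦ1 0).hasDerivAt).mul (hcos 0)).add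
        ((hcos 0).mul (((hsin 0).neg).mul (dΦ1 0).hasDerivAt))
    have hbig := (((hA1.add hA2).add (hB1.add hB2)).add hC).congr_of_eventuallyEq
      (f₁ := deriv (deriv (deriv x)))
      (Filter.Eventually.of_forall fun s => (hF' s).deriv)
    rw [hbig.deriv]
    simp [hc0, hs0, hl0, hl1_0, hx0', hy0', hφ0', hφ2_0, hφ3_0, hx2_0, hy2_0, hx3_0]
    ring
  have T : Tendsto (fun t => x t / t ^ 4) (nhdsWithin 0 {(0 : ℝ)}ᶜ)
      (nhds (-v₀ ^ 2 / 24)) := by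
    have h := quartic_limit hX hx0 hx0' hx2_0 hx3_0 hx4_0
    convert h using 2
  refine ⟨T, ?_⟩
  have hneg : -v₀ ^ 2 / 24 < 0 := by
    have h2 : (0:ℝ) < v₀ ^ 2 := by positivity
    nlinarith
  have hev : ∀ᶠ t in nhdsWithin (0:ℝ) {(0:ℝ)}ᶜ, x t / t ^ 4 < 0 :=
    T.eventually (eventually_lt_nhds hneg)
  rw [eventually_nhdsWithin_iff, Metric.eventually_nhds_iff] at hev
  obtain ⟨δ, hδ, hδ'⟩ := hev
  refine ⟨δ, hδ, fun t ht hta => ?_⟩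
  have h1 : x t / t ^ 4 < 0 := hδ' (by simpa [Real.dist_eq] using hta) (by simpa using ht)
  have h2 : (0:ℝ) < t ^ 4 := by positivity
  have h3 := mul_neg_of_neg_of_pos h1 h2
  rwa [div_mul_cancel₀ _ (ne_of_gt h2)] at h3
end

section
/- Let k > 0 and w be real numbers. Define φ(t) = (w/k)(1 − e^{−kt}), x(t) = ½ (∫₀ᵗ cos(φ(τ)) dτ)², and y(t) = ∫₀ᵗ sin(φ(ξ)) (∫₀^ξ cos(φ(τ)) dτ) dξ. Then (x, y, φ) satisfies the dissipative nonholonomic skate system on ℝ, the constraint ẋ sin φ − ẏ cos φ = 0 on ℝ, and the initial conditions (x(0), y(0), φ(0), ẋ(0), ẏ(0), φ̇(0)) = (0, 0, 0, 0, 0, w). -/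
open Real

/-- For `k > 0` and `w` real, the functions
`φ(t) = (w/k)(1 − e^{−kt})`, `x(t) = ½ (∫₀ᵗ cos(φ(τ)) dτ)²`,
`y(t) = ∫₀ᵗ sin(φ(ξ)) (∫₀^ξ cos(φ(τ)) dτ) dξ` satisfy the dissipative nonholonomic
skate system, the constraint `ẋ sinφ − ẏ cosφ = 0`, and the initial conditions
`(x,y,φ,ẋ,ẏ,φ̇)(0) = (0, 0, 0, 0, 0, w)`. -/
theorem stmt_17 (k w : ℝ) (hk : 0 < k)
    (x y φ : ℝ → ℝ)
    (hφdef : φ = fun t => (w / k) * (1 - Real.exp (-k * t)))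
    (hxdef : x = fun t => (1 / 2) * (∫ τ in (0:ℝ)..t, cos (φ τ)) ^ 2)
    (hydef : y = fun t => ∫ ξ in (0:ℝ)..t, sin (φ ξ) * ∫ τ in (0:ℝ)..ξ, cos (φ τ)) :
    (∀ t, deriv (deriv x) t =
      cos (φ t) ^ 2 - deriv φ t * sin (φ t) *
        (deriv x t * cos (φ t) + deriv y t * sin (φ t))) ∧
    (∀ t, deriv (deriv y) t =
      cos (φ t) * sin (φ t) + deriv φ t * cos (φ t) *
        (deriv x t * cos (φ t) + deriv y t * sin (φ t))) ∧
    (∀ t, deriv (deriv φ) t = -k * deriv φ t) ∧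
    (∀ t, deriv x t * sin (φ t) - deriv y t * cos (φ t) = 0) ∧
    x 0 = 0 ∧ y 0 = 0 ∧ φ 0 = 0 ∧
    deriv x 0 = 0 ∧ deriv y 0 = 0 ∧ deriv φ 0 = w := by
  have hk' : k ≠ 0 := hk.ne'
  -- φ derivative
  have hφcont : Continuous φ := by rw [hφdef]; continuity
  have hφd : ∀ t, HasDerivAt φ (w * Real.exp (-k * t)) t := by
    intro t
    rw [hφdef]
    have h1 : HasDerivAt (fun t : ℝ => Real.exp (-k * t))
        (Real.exp (-k * t) * (-k)) t :=
      (Real.hasDerivAt_exp _).comp t (by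
        have hin : HasDerivAt (fun t : ℝ => -k * t) (-k) t := by
          simpa using (hasDerivAt_id t).const_mul (-k)
        exact hin)
    have h2 := ((hasDerivAt_const t (1:ℝ)).sub h1).const_mul (w / k)
    refine h2.congr_deriv ?_
    field_simp
    ring
  have hφderiv : deriv φ = fun t => w * Real.exp (-k * t) :=
    funext fun t => (hφd t).deriv
  -- C t = ∫ cos (φ τ)
  set C : ℝ → ℝ := fun t => ∫ τ in (0:ℝ)..t, cos (φ τ) with hCdef
  have hcosφ : Continuous fun τ => cos (φ τ) := Real.continuous_cos.comp hφcont
  have hsinφ : Continuous fun τ => sin (φ τ) := Real.continuous_sin.comp hφcont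
  have hCd : ∀ t, HasDerivAt C (cos (φ t)) t := fun t =>
    (hcosφ.integral_hasStrictDerivAt 0 t).hasDerivAt
  have hCcont : Continuous C :=
    continuous_iff_continuousAt.2 fun t => (hCd t).continuousAt
  -- derivatives of sin(φ t) and cos(φ t)
  have hsind : ∀ t, HasDerivAt (fun t => sin (φ t))
      (cos (φ t) * (w * Real.exp (-k * t))) t := fun t =>
    (Real.hasDerivAt_sin (φ t)).comp t (hφd t)
  have hcosd : ∀ t, HasDerivAt (fun t => cos (φ t))
      (-sin (φ t) * (w * Real.exp (-k * t))) t := fun t =>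
    (Real.hasDerivAt_cos (φ t)).comp t (hφd t)
  -- x derivative
  have hxd : ∀ t, HasDerivAt x (C t * cos (φ t)) t := by
    intro t
    rw [hxdef]
    have := ((hCd t).pow 2).const_mul (1 / 2 : ℝ)
    refine this.congr_deriv ?_
    push_cast
    ring
  have hxderiv : deriv x = fun t => C t * cos (φ t) :=
    funext fun t => (hxd t).deriv
  -- y derivative
  have hyint : Continuous fun ξ => sin (φ ξ) * C ξ := hsinφ.mul hCcont
  have hyd : ∀ t, HasDerivAt y (sin (φ t) * C t) t := by
    intro t
    rw [hydef]
    exact (hyint.integral_hasStrictDerivAt 0 t).hasDerivAt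
  have hyderiv : deriv y = fun t => sin (φ t) * C t :=
    funext fun t => (hyd t).deriv
  -- second derivatives
  have hxdd : ∀ t, deriv (deriv x) t
      = cos (φ t) * cos (φ t) + C t * (-sin (φ t) * (w * Real.exp (-k * t))) := by
    intro t
    rw [hxderiv]
    exact ((hCd t).mul (hcosd t)).deriv
  have hydd : ∀ t, deriv (deriv y) t
      = cos (φ t) * (w * Real.exp (-k * t)) * C t + sin (φ t) * cos (φ t) := by
    intro t
    rw [hyderiv]
    exact ((hsind t).mul (hCd t)).deriv
  have hφdd : ∀ t, deriv (deriv φ) t = -k * (w * Real.exp (-k * t)) := by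
    intro t
    rw [hφderiv]
    have h1 : HasDerivAt (fun t : ℝ => Real.exp (-k * t))
        (Real.exp (-k * t) * (-k)) t :=
      (Real.hasDerivAt_exp _).comp t (by
        have hin : HasDerivAt (fun t : ℝ => -k * t) (-k) t := by
          simpa using (hasDerivAt_id t).const_mul (-k)
        exact hin)
    have := (h1.const_mul w).deriv
    rw [this]; ring
  have hC0 : C 0 = 0 := by simp [hCdef]
  refine ⟨?_, ?_, ?_, ?_, ?_, ?_, ?_, ?_, ?_, ?_⟩
  · intro t
    rw [hxdd t, hφderiv, hxderiv, hyderiv]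
    have h := sin_sq_add_cos_sq (φ t)
    simp only []
    linear_combination (w * Real.exp (-k * t) * sin (φ t) * C t) * h
  · intro t
    rw [hydd t, hφderiv, hxderiv, hyderiv]
    have h := sin_sq_add_cos_sq (φ t)
    simp only []
    linear_combination (-(w * Real.exp (-k * t) * cos (φ t) * C t)) * h
  · intro t
    rw [hφdd t, hφderiv]
  · intro t
    rw [hxderiv, hyderiv]; ring
  · rw [hxdef]; simp
  · rw [hydef]; simp
  · rw [hφdef]; simp
  · rw [hxderiv]; simp [hC0]
  · rw [hyderiv]; simp [hC0]
  · rw [hφderiv]; simp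
end

section
/- Let k > 0 and w be real numbers with w/k ∉ {π/2 + mπ : m ∈ ℤ}, and define x(t) = ½ (∫₀ᵗ cos((w/k)(1 − e^{−kτ})) dτ)². Then x(t) → +∞ as t → +∞. -/
open Real Filter

/-- For `k > 0` and `w` with `w/k ∉ {π/2 + mπ : m ∈ ℤ}`, the function
`x(t) = ½ (∫₀ᵗ cos((w/k)(1 − e^{−kτ})) dτ)²` tends to `+∞` as `t → +∞`. -/
theorem stmt_18 (k w : ℝ) (hk : 0 < k)
    (hw : ∀ m : ℤ, w / k ≠ π / 2 + m * π)
    (x : ℝ → ℝ)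
    (hxdef : x = fun t =>
      (1 / 2) * (∫ τ in (0:ℝ)..t, cos ((w / k) * (1 - Real.exp (-k * τ)))) ^ 2) :
    Tendsto x atTop atTop := by
  subst hxdef
  set c : ℝ := Real.cos (w / k) with hc
  have hc0 : c ≠ 0 := by
    rw [hc, Ne, Real.cos_eq_zero_iff]
    rintro ⟨m, hm⟩
    exact hw m (by rw [hm]; ring)
  set f : ℝ → ℝ := fun τ => Real.cos ((w / k) * (1 - Real.exp (-k * τ))) with hf
  have hcontf : Continuous f := by
    apply Real.continuous_cos.comp
    exact continuous_const.mul (continuous_const.sub ((continuous_const.mul continuous_id).rexp))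
  have hint : ∀ a b : ℝ, IntervalIntegrable f MeasureTheory.volume a b :=
    fun a b => hcontf.intervalIntegrable a b
  set g : ℝ → ℝ := fun t => ∫ τ in (0:ℝ)..t, f τ with hg
  -- limit of f
  have h1 : Tendsto (fun τ : ℝ => -k * τ) atTop atBot := by
    have h : Tendsto (fun τ : ℝ => k * τ) atTop atTop :=
      tendsto_id.const_mul_atTop hk
    exact (tendsto_neg_atTop_atBot.comp h).congr fun τ => (neg_mul k τ).symm
  have h2 : Tendsto (fun τ : ℝ => Real.exp (-k * τ)) atTop (nhds 0) :=
    Real.tendsto_exp_atBot.comp h1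
  have h3 : Tendsto (fun τ : ℝ => (w / k) * (1 - Real.exp (-k * τ))) atTop
      (nhds (w / k)) := by
    have hsub1 : Tendsto (fun τ : ℝ => (1:ℝ) - Real.exp (-k * τ)) atTop (nhds (1 - 0)) :=
      tendsto_const_nhds.sub h2
    have := hsub1.const_mul (w / k)
    simpa using this
  have hflim : Tendsto f atTop (nhds c) := by
    have := (Real.continuous_cos.continuousAt (x := w / k)).tendsto.comp h3
    simpa [hf, hc, Function.comp_def] using this
  -- eventually close to c
  have hev : ∀ᶠ τ in atTop, |f τ - c| ≤ |c| / 2 := by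
    have hb : Metric.closedBall c (|c| / 2) ∈ nhds c :=
      Metric.closedBall_mem_nhds c (by positivity)
    filter_upwards [hflim.eventually hb] with τ hτ
    simpa [Real.dist_eq] using hτ
  obtain ⟨T, hT⟩ := eventually_atTop.mp hev
  -- key lower bound
  have hlow : ∀ᶠ t in atTop, (|c| / 2) * (t - T) - |g T| ≤ |g t| := by
    filter_upwards [eventually_ge_atTop T] with t ht
    have hadd : g T + (∫ τ in T..t, f τ) = g t :=
      intervalIntegral.integral_add_adjacent_intervals (hint 0 T) (hint T t)
    have hsub : (∫ τ in T..t, (f τ - c)) = (∫ τ in T..t, f τ) - c * (t - T) := by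
      rw [intervalIntegral.integral_sub (hint T t) intervalIntegrable_const]
      simp [intervalIntegral.integral_const, smul_eq_mul, mul_comm]
    have hbound : |∫ τ in T..t, (f τ - c)| ≤ (|c| / 2) * (t - T) := by
      have := intervalIntegral.norm_integral_le_of_norm_le_const
        (a := T) (b := t) (C := |c| / 2) (f := fun τ => f τ - c) ?_
      · rwa [Real.norm_eq_abs, abs_of_nonneg (show (0:ℝ) ≤ t - T by linarith)] at this
      · intro y hy
        rw [Set.uIoc_of_le ht] at hy
        exact (Real.norm_eq_abs _).trans_le (hT y (le_of_lt hy.1))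
    have h4 : (|c| / 2) * (t - T) ≤ |∫ τ in T..t, f τ| := by
      have habs : |c * (t - T)| - |∫ τ in T..t, (f τ - c)| ≤ |∫ τ in T..t, f τ| := by
        have := abs_sub_abs_le_abs_sub (c * (t - T)) (c * (t - T) - (∫ τ in T..t, f τ))
        have heq : c * (t - T) - (c * (t - T) - (∫ τ in T..t, f τ)) = ∫ τ in T..t, f τ := by
          ring
        rw [heq] at this
        have heq2 : |c * (t - T) - (∫ τ in T..t, f τ)| = |∫ τ in T..t, (f τ - c)| := by
          rw [hsub, abs_sub_comm]
        linarith [this, heq2 ▸ le_refl (|c * (t - T) - (∫ τ in T..t, f τ)|)]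
      have : |c * (t - T)| = |c| * (t - T) := by
        rw [abs_mul, abs_of_nonneg (by linarith : (0:ℝ) ≤ t - T)]
      nlinarith [hbound, habs]
    have h5 : |∫ τ in T..t, f τ| ≤ |g t| + |g T| := by
      have : (∫ τ in T..t, f τ) = g t - g T := by linarith [hadd]
      rw [this]
      exact (abs_sub _ _)
    linarith
  have habs : Tendsto (fun t => |g t|) atTop atTop := by
    apply tendsto_atTop_mono' atTop hlow
    have hlin : Tendsto (fun t : ℝ => (|c| / 2) * (t - T)) atTop atTop := by
      apply Tendsto.const_mul_atTop (by positivity)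
      exact tendsto_atTop_add_const_right _ (-T) tendsto_id
    exact tendsto_atTop_add_const_right _ (-|g T|) hlin
  have hsq : Tendsto (fun s : ℝ => (1 / 2 : ℝ) * s ^ 2) atTop atTop :=
    (tendsto_pow_atTop (two_ne_zero)).const_mul_atTop (by norm_num)
  have := hsq.comp habs
  convert this using 2 with t
  simp [Function.comp, sq_abs, hg]
end

section
/- Let k > 0 and w be real numbers with w/k ∈ {π/2 + mπ : m ∈ ℤ}, and define x(t) = ½ (∫₀ᵗ cos((w/k)(1 − e^{−kτ})) dτ)². Then x(t) converges, as t → +∞, to a finite limit L with L > 0. -/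
open Real Filter

open MeasureTheory

lemma si_int (a b : ℝ) : IntervalIntegrable (fun u => Real.sin u / u) volume a b := by
  apply (_root_.intervalIntegrable_const (c := (1:ℝ))).mono_fun'
  · exact (Real.measurable_sin.div measurable_id).aestronglyMeasurable
  · filter_upwards with u
    simp only [Real.norm_eq_abs, abs_div]
    rcases eq_or_ne u 0 with h | h
    · simp [h]
    · rw [div_le_one (abs_pos.2 h)]
      exact Real.abs_sin_le_abs

lemma hA_lemma : (1:ℝ) ≤ ∫ u in (0:ℝ)..(π/2), Real.sin u / u := by
  have h1 : ∫ u in (0:ℝ)..(π/2), (2/π : ℝ) = 1 := by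
    rw [intervalIntegral.integral_const]
    simp only [sub_zero, smul_eq_mul]
    field_simp
  rw [← h1]
  refine intervalIntegral.integral_mono_ae_restrict (by positivity)
    (_root_.intervalIntegrable_const) (si_int _ _) ?_
  have h0 : ∀ᵐ (u : ℝ) ∂(volume.restrict (Set.Icc (0:ℝ) (π/2))), u ≠ 0 := by
    refine ae_restrict_of_ae ?_
    simp [ae_iff, Set.setOf_eq_eq_singleton']
  filter_upwards [ae_restrict_mem measurableSet_Icc, h0] with u hu hu0
  have hupos : 0 < u := lt_of_le_of_ne hu.1 (Ne.symm hu0)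
  rw [le_div_iff₀ hupos]
  exact Real.mul_le_sin hupos.le hu.2

lemma S_pos_of_gt_pi {c : ℝ} (hc : π < c) : 0 < ∫ u in (0:ℝ)..c, Real.sin u / u := by
  have hπ : (0:ℝ) < π := Real.pi_pos
  have hc0 : (0:ℝ) < c := hπ.trans hc
  -- integration by parts identity
  have hderiv : ∀ u ∈ Set.uIcc π c, HasDerivAt (fun v => -(Real.cos v / v))
      (Real.sin u / u + Real.cos u / u ^ 2) u := by
    intro u hu
    rw [Set.uIcc_of_le hc.le] at hu
    have hu0 : u ≠ 0 := (hπ.trans_le hu.1).ne'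
    have h1 : HasDerivAt (fun v => Real.cos v / v)
        ((-Real.sin u * u - Real.cos u * 1) / u ^ 2) u :=
      (Real.hasDerivAt_cos u).div (hasDerivAt_id u) hu0
    have := h1.fun_neg
    refine this.congr_deriv ?_
    field_simp
    ring
  have hcont : ContinuousOn (fun u => Real.sin u / u + Real.cos u / u ^ 2) (Set.uIcc π c) := by
    rw [Set.uIcc_of_le hc.le]
    apply ContinuousOn.add
    · exact Real.continuous_sin.continuousOn.div continuousOn_id
        (fun u hu => (hπ.trans_le hu.1).ne')
    · exact Real.continuous_cos.continuousOn.div (continuousOn_pow 2)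
        (fun u hu => (pow_pos (hπ.trans_le hu.1) 2).ne')
  have hIBP : ∫ u in π..c, (Real.sin u / u + Real.cos u / u ^ 2)
      = -(Real.cos c / c) - -(Real.cos π / π) :=
    intervalIntegral.integral_eq_sub_of_hasDerivAt hderiv
      (hcont.intervalIntegrable)
  have hint2 : IntervalIntegrable (fun u => Real.cos u / u ^ 2) volume π c := by
    apply ContinuousOn.intervalIntegrable
    rw [Set.uIcc_of_le hc.le]
    exact Real.continuous_cos.continuousOn.div (continuousOn_pow 2)
      (fun u hu => (pow_pos (hπ.trans_le hu.1) 2).ne')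
  have hsplitC : ∫ u in π..c, Real.sin u / u
      = (-(Real.cos c / c) - -(Real.cos π / π)) - ∫ u in π..c, Real.cos u / u ^ 2 := by
    rw [← hIBP, intervalIntegral.integral_add (si_int _ _) hint2]
    ring
  -- bound on the correction term
  have hDbound : ∫ u in π..c, Real.cos u / u ^ 2 ≤ 1/π - 1/c := by
    have hid : ∫ u in π..c, (u:ℝ)⁻¹ ^ 2 * 1 = -c⁻¹ - -π⁻¹ := by
      apply intervalIntegral.integral_eq_sub_of_hasDerivAt
      · intro u hu
        rw [Set.uIcc_of_le hc.le] at hu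
        have hu0 : u ≠ 0 := (hπ.trans_le hu.1).ne'
        simpa [mul_one, inv_pow] using (hasDerivAt_inv hu0).fun_neg
      · apply ContinuousOn.intervalIntegrable
        rw [Set.uIcc_of_le hc.le]
        exact ((continuousOn_id.inv₀ (fun u hu => (hπ.trans_le hu.1).ne')).pow 2).mul
          continuousOn_const
    have hmono : ∫ u in π..c, Real.cos u / u ^ 2 ≤ ∫ u in π..c, (u:ℝ)⁻¹ ^ 2 * 1 := by
      apply intervalIntegral.integral_mono_on hc.le hint2
      · apply ContinuousOn.intervalIntegrable
        rw [Set.uIcc_of_le hc.le]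
        exact ((continuousOn_id.inv₀ (fun u hu => (hπ.trans_le hu.1).ne')).pow 2).mul
          continuousOn_const
      · intro u hu
        have hu0 : (0:ℝ) < u := hπ.trans_le hu.1
        rw [mul_one, inv_pow, ← one_div]
        exact (div_le_div_iff_of_pos_right (pow_pos hu0 2)).mpr (Real.cos_le_one u)
    calc ∫ u in π..c, Real.cos u / u ^ 2 ≤ -c⁻¹ - -π⁻¹ := hmono.trans_eq hid
      _ = 1/π - 1/c := by rw [one_div, one_div]; ring
  have hB : (0:ℝ) ≤ ∫ u in (π/2)..π, Real.sin u / u := by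
    apply intervalIntegral.integral_nonneg (by linarith)
    intro u hu
    have h1 : (0:ℝ) < u := by have := hu.1; linarith
    exact div_nonneg (Real.sin_nonneg_of_nonneg_of_le_pi (by linarith [hu.1]) hu.2) h1.le
  have hsplit : ∫ u in (0:ℝ)..c, Real.sin u / u
      = (∫ u in (0:ℝ)..(π/2), Real.sin u / u) + (∫ u in (π/2)..π, Real.sin u / u)
        + ∫ u in π..c, Real.sin u / u := by
    rw [intervalIntegral.integral_add_adjacent_intervals (si_int _ _) (si_int _ _),
      intervalIntegral.integral_add_adjacent_intervals (si_int _ _) (si_int _ _)]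
  have hcosc : -(Real.cos c / c) ≥ -(1/c) := by
    have : Real.cos c / c ≤ 1/c := (div_le_div_iff_of_pos_right hc0).mpr (Real.cos_le_one c)
    linarith
  have hpi2 : 2/π < 1 := by
    rw [div_lt_one hπ]
    linarith [Real.pi_gt_three]
  have hcospi : Real.cos π = -1 := Real.cos_pi
  rw [hsplit, hsplitC, hcospi, neg_div, neg_neg]
  have hA := hA_lemma
  have h1π : (0:ℝ) < 1/π := by positivity
  have h2 : (1:ℝ)/π < 1/2 := by
    rw [div_lt_div_iff₀ hπ (by norm_num)]
    linarith [Real.pi_gt_three]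
  linarith [hA, hB, hDbound, hcosc]

lemma S_pos {c : ℝ} (hc : 0 < c) : 0 < ∫ u in (0:ℝ)..c, Real.sin u / u := by
  rcases le_or_gt c π with h | h
  · refine intervalIntegral.intervalIntegral_pos_of_pos_on (si_int _ _) ?_ hc
    intro u hu
    exact div_pos (Real.sin_pos_of_pos_of_lt_pi hu.1 (hu.2.trans_le h)) hu.1
  · exact S_pos_of_gt_pi h

/-- For `k > 0` and `w` with `w/k ∈ {π/2 + mπ : m ∈ ℤ}`, the function
`x(t) = ½ (∫₀ᵗ cos((w/k)(1 − e^{−kτ})) dτ)²` converges, as `t → +∞`, to a finite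
limit `L` with `L > 0`. -/
theorem stmt_19 (k w : ℝ) (hk : 0 < k)
    (hw : ∃ m : ℤ, w / k = π / 2 + m * π)
    (x : ℝ → ℝ)
    (hxdef : x = fun t =>
      (1 / 2) * (∫ τ in (0:ℝ)..t, cos ((w / k) * (1 - Real.exp (-k * τ)))) ^ 2) :
    ∃ L : ℝ, 0 < L ∧ Tendsto x atTop (nhds L) := by
  obtain ⟨m, hm⟩ := hw
  obtain ⟨m', hm'0, hceq⟩ : ∃ m' : ℤ, 0 ≤ m'
      ∧ (w/k = π/2 + m'*π ∨ w/k = -(π/2 + m'*π)) := by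
    rcases le_or_gt 0 m with h | h
    · exact ⟨m, h, Or.inl hm⟩
    · refine ⟨-1 - m, by omega, Or.inr ?_⟩
      rw [hm]; push_cast; ring
  set c : ℝ := π/2 + m'*π with hc
  have hπ := Real.pi_pos
  have hc0 : 0 < c := by
    have h1 : (0:ℝ) ≤ (m':ℝ) * π := mul_nonneg (by exact_mod_cast hm'0) hπ.le
    rw [hc]; linarith
  have hcosc : Real.cos c = 0 := by
    rw [hc, Real.cos_add]
    simp [Real.sin_int_mul_pi]
  have hsinc : Real.sin c ≠ 0 := by
    intro h
    have h2 := Real.sin_sq_add_cos_sq c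
    rw [h, hcosc] at h2; norm_num at h2
  have hkey : ∀ τ : ℝ, Real.cos ((w/k) * (1 - Real.exp (-k*τ)))
      = Real.sin c * Real.sin (c * Real.exp (-k*τ)) := by
    intro τ
    have hcc : Real.cos (c * (1 - Real.exp (-k*τ)))
        = Real.sin c * Real.sin (c * Real.exp (-k*τ)) := by
      rw [show c * (1 - Real.exp (-k*τ)) = c - c * Real.exp (-k*τ) by ring,
        Real.cos_sub, hcosc]
      ring
    rcases hceq with h | h
    · rw [h, hcc]
    · rw [h, neg_mul, Real.cos_neg, hcc]
  set F : ℝ → ℝ := fun t => ∫ τ in (0:ℝ)..t, Real.sin (c * Real.exp (-k*τ)) with hF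
  set S : ℝ := ∫ u in (0:ℝ)..c, Real.sin u / u with hSdef
  have hS : 0 < S := S_pos hc0
  -- substitution
  have hsub : ∀ t : ℝ, F t
      = (1/k) * (S - ∫ u in (0:ℝ)..(c * Real.exp (-k*t)), Real.sin u / u) := by
    intro t
    have hφ : ∀ τ ∈ Set.uIcc (0:ℝ) t,
        HasDerivAt (fun τ => c * Real.exp (-k*τ)) (-(k * (c * Real.exp (-k*τ)))) τ := by
      intro τ _
      have h1 : HasDerivAt (fun τ : ℝ => -k*τ) (-k) τ := by
        simpa using (hasDerivAt_id τ).const_mul (-k)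
      have h2 := (Real.hasDerivAt_exp (-k*τ)).comp τ h1
      have h3 := h2.const_mul c
      have h4 : -(k * (c * Real.exp (-k*τ))) = c * (Real.exp (-k*τ) * (-k)) := by ring
      rw [h4]
      exact h3
    have hcont' : ContinuousOn (fun τ : ℝ => -(k * (c * Real.exp (-k*τ))))
        (Set.uIcc 0 t) := by
      apply Continuous.continuousOn
      continuity
    have himg : ContinuousOn (fun u => Real.sin u / u)
        ((fun τ => c * Real.exp (-k*τ)) '' Set.uIcc 0 t) := by
      apply ContinuousOn.div Real.continuous_sin.continuousOn continuousOn_id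
      rintro u ⟨τ, -, rfl⟩
      exact (mul_pos hc0 (Real.exp_pos _)).ne'
    have hcv := intervalIntegral.integral_comp_smul_deriv' hφ hcont' himg
    have hL : (∫ τ in (0:ℝ)..t,
          (-(k * (c * Real.exp (-k*τ)))) • ((fun u => Real.sin u / u) ∘ (fun τ => c * Real.exp (-k*τ))) τ)
        = (-k) * F t := by
      rw [hF, ← intervalIntegral.integral_const_mul]
      apply intervalIntegral.integral_congr
      intro τ _
      have hne : c * Real.exp (-k*τ) ≠ 0 := (mul_pos hc0 (Real.exp_pos _)).ne'
      simp only [Function.comp, smul_eq_mul]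
      field_simp
    rw [hL] at hcv
    have h0 : c * Real.exp (-k*(0:ℝ)) = c := by simp
    rw [h0] at hcv
    have hsubL : (∫ u in c..(c * Real.exp (-k*t)), Real.sin u / u)
        = (∫ u in (0:ℝ)..(c * Real.exp (-k*t)), Real.sin u / u) - S := by
      rw [hSdef, ← intervalIntegral.integral_interval_sub_left (si_int _ _) (si_int _ _)]
    rw [hsubL] at hcv
    have hk' : k ≠ 0 := hk.ne'
    field_simp at hcv ⊢
    linarith
  -- limit of F
  have hε : Tendsto (fun t => c * Real.exp (-k*t)) atTop (nhds 0) := by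
    have h1 : Tendsto (fun t : ℝ => k * t) atTop atTop :=
      tendsto_id.const_mul_atTop hk
    have h2 : Tendsto (fun t : ℝ => -k * t) atTop atBot :=
      (tendsto_neg_atTop_atBot.comp h1).congr (fun t => by simp [Function.comp, neg_mul])
    have h3 := Real.tendsto_exp_atBot.comp h2
    have h4 := h3.const_mul c
    simpa using h4
  have hG : Continuous (fun b => ∫ u in (0:ℝ)..b, Real.sin u / u) :=
    intervalIntegral.continuous_primitive (fun a b => si_int a b) 0
  have hGlim : Tendsto (fun t => ∫ u in (0:ℝ)..(c * Real.exp (-k*t)), Real.sin u / u)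
      atTop (nhds 0) := by
    have := (hG.tendsto 0).comp hε
    simpa [Function.comp_def] using this
  have hFlim : Tendsto F atTop (nhds ((1/k) * S)) := by
    have h1 : Tendsto (fun t => (1/k) * (S - ∫ u in (0:ℝ)..(c * Real.exp (-k*t)), Real.sin u / u))
        atTop (nhds ((1/k) * (S - 0))) :=
      (tendsto_const_nhds.sub hGlim).const_mul _
    rw [sub_zero] at h1
    exact h1.congr (fun t => (hsub t).symm)
  -- conclude
  refine ⟨(1/2) * (Real.sin c * ((1/k) * S))^2, ?_, ?_⟩
  · have hbase : Real.sin c * ((1/k) * S) ≠ 0 :=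
      mul_ne_zero hsinc (mul_ne_zero (by positivity) hS.ne')
    have h2 : 0 < (Real.sin c * ((1/k) * S))^2 :=
      lt_of_le_of_ne (sq_nonneg _) (Ne.symm (pow_ne_zero 2 hbase))
    linarith
  · have hxeq : x = fun t => (1/2) * (Real.sin c * F t)^2 := by
      rw [hxdef]
      funext t
      congr 1
      rw [hF]
      congr 1
      rw [← intervalIntegral.integral_const_mul]
      exact intervalIntegral.integral_congr (fun τ _ => hkey τ)
    rw [hxeq]
    exact ((hFlim.const_mul (Real.sin c)).pow 2).const_mul _
end
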